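/- arXiv:math/0108110 — 14 statements merged into one kernel-verified Lean document; each statement's English description precedes it below -/
import Mathlib

section
/- Let J₀ be an almost complex structure on V and let K : V → V be a linear endomorphism with K J₀ = −J₀ K such that 1 − K is invertible. Then J := J₀ (1 + K)(1 − K)⁻¹ is an almost complex structure on V (i.e. J² = −1), it also equals (1 − K) J₀ (1 − K)⁻¹, and the endomorphism 1 − J J₀ is invertible; in fact 1 − J J₀ = −2 J₀ (1 − K)⁻¹ J₀. (Proposition 3.1, forward direction, together with Remark (3.8).) -/
/-!
STATEMENT 0 (Proposition 3.1, forward direction, with Remark (3.8)).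

`V` is a finite-dimensional real vector space; endomorphisms are composed
multiplicatively and `1` is the identity.  An almost complex structure is an
endomorphism `J` with `J * J = -1`.  Given an almost complex structure `J₀`
and an endomorphism `K` anticommuting with `J₀` such that `1 - K` is
invertible, the endomorphism `J := J₀ * (1 + K) * (1 - K)⁻¹` is an almost
complex structure, equals `(1 - K) * J₀ * (1 - K)⁻¹`, and `1 - J * J₀` is
invertible, with `1 - J * J₀ = -(2 * (J₀ * (1 - K)⁻¹ * J₀))`.
-/

theorem space_of_associated_metrics.stmt_0
    {V : Type*} [AddCommGroup V] [Module ℝ V] [FiniteDimensional ℝ V]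
    (J₀ K : Module.End ℝ V)
    (hJ₀ : J₀ * J₀ = -1)
    (hanti : K * J₀ = -(J₀ * K))
    (hK : IsUnit (1 - K)) :
    (J₀ * (1 + K) * Ring.inverse (1 - K)) * (J₀ * (1 + K) * Ring.inverse (1 - K)) = -1 ∧
    J₀ * (1 + K) * Ring.inverse (1 - K) = (1 - K) * J₀ * Ring.inverse (1 - K) ∧
    IsUnit (1 - (J₀ * (1 + K) * Ring.inverse (1 - K)) * J₀) ∧
    1 - (J₀ * (1 + K) * Ring.inverse (1 - K)) * J₀ =
      -(2 * (J₀ * Ring.inverse (1 - K) * J₀)) := by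
  set R := Ring.inverse (1 - K) with hRdef
  have h1 : (1 - K) * R = 1 := Ring.mul_inverse_cancel _ hK
  have h2 : R * (1 - K) = 1 := Ring.inverse_mul_cancel _ hK
  have hJK : J₀ * K = -(K * J₀) := by rw [hanti, neg_neg]
  have hcomm : J₀ * (1 + K) = (1 - K) * J₀ := by
    rw [mul_add, mul_one, sub_mul, one_mul, hJK, sub_eq_add_neg]
  have hcomm2 : (1 + K) * J₀ = J₀ * (1 - K) := by
    rw [add_mul, one_mul, hanti, mul_sub, mul_one, sub_eq_add_neg]
  have part2 : J₀ * (1 + K) * R = (1 - K) * J₀ * R := by rw [hcomm]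
  have part1 : (J₀ * (1 + K) * R) * (J₀ * (1 + K) * R) = -1 := by
    rw [hcomm]
    calc (1 - K) * J₀ * R * ((1 - K) * J₀ * R)
        = (1 - K) * (J₀ * ((R * (1 - K)) * (J₀ * R))) := by simp only [mul_assoc]
      _ = (1 - K) * (J₀ * (J₀ * R)) := by rw [h2, one_mul]
      _ = (1 - K) * (J₀ * J₀ * R) := by rw [mul_assoc J₀ J₀ R]
      _ = (1 - K) * (-1 * R) := by rw [hJ₀]
      _ = -((1 - K) * R) := by rw [neg_one_mul, mul_neg]
      _ = -1 := by rw [h1]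
  have key0 : (1 + K) * (J₀ * (R * J₀)) = -1 := by
    calc (1 + K) * (J₀ * (R * J₀))
        = ((1 + K) * J₀) * (R * J₀) := (mul_assoc _ _ _).symm
      _ = (J₀ * (1 - K)) * (R * J₀) := by rw [hcomm2]
      _ = J₀ * (((1 - K) * R) * J₀) := by simp only [mul_assoc]
      _ = J₀ * J₀ := by rw [h1, one_mul]
      _ = -1 := hJ₀
  have key : K * (J₀ * (R * J₀)) = -1 - J₀ * (R * J₀) := by
    rw [add_mul, one_mul] at key0
    exact eq_sub_of_add_eq' key0
  have part4 : 1 - (J₀ * (1 + K) * R) * J₀ = -(2 * (J₀ * R * J₀)) := by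
    rw [hcomm]
    have hA : (1 - K) * J₀ * R * J₀ = J₀ * (R * J₀) - K * (J₀ * (R * J₀)) := by
      calc (1 - K) * J₀ * R * J₀ = (1 - K) * (J₀ * (R * J₀)) := by simp only [mul_assoc]
        _ = J₀ * (R * J₀) - K * (J₀ * (R * J₀)) := by rw [sub_mul, one_mul]
    rw [hA, key, mul_assoc J₀ R J₀]
    noncomm_ring
  have part3 : IsUnit (1 - (J₀ * (1 + K) * R) * J₀) := by
    rw [part4]
    have hXinv : (J₀ * R * J₀) * (J₀ * (1 - K) * J₀) = 1 := by
      calc (J₀ * R * J₀) * (J₀ * (1 - K) * J₀)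
          = J₀ * (R * ((J₀ * J₀) * ((1 - K) * J₀))) := by simp only [mul_assoc]
        _ = J₀ * (R * (-1 * ((1 - K) * J₀))) := by rw [hJ₀]
        _ = -((J₀ * (R * (1 - K))) * J₀) := by
              rw [neg_one_mul, mul_neg, mul_neg]; simp only [mul_assoc]
        _ = -(J₀ * 1 * J₀) := by rw [h2]
        _ = 1 := by rw [mul_one, hJ₀, neg_neg]
    have hXinv' : (J₀ * (1 - K) * J₀) * (J₀ * R * J₀) = 1 := by
      calc (J₀ * (1 - K) * J₀) * (J₀ * R * J₀)
          = J₀ * ((1 - K) * ((J₀ * J₀) * (R * J₀))) := by simp only [mul_assoc]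
        _ = J₀ * ((1 - K) * (-1 * (R * J₀))) := by rw [hJ₀]
        _ = -((J₀ * ((1 - K) * R)) * J₀) := by
              rw [neg_one_mul, mul_neg, mul_neg]; simp only [mul_assoc]
        _ = -(J₀ * 1 * J₀) := by rw [h1]
        _ = 1 := by rw [mul_one, hJ₀, neg_neg]
    have hX : IsUnit (J₀ * R * J₀) := ⟨⟨_, _, hXinv, hXinv'⟩, rfl⟩
    have h2u : IsUnit (2 : Module.End ℝ V) := by
      have := (isUnit_iff_ne_zero.mpr (two_ne_zero (α := ℝ))).map
        (algebraMap ℝ (Module.End ℝ V))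
      rwa [map_ofNat] at this
    exact (h2u.mul hX).neg
  exact ⟨part1, part2, part3, part4⟩
end

section
/- Suppose J₀ is compatible with g₀ and let J be an almost complex structure on V. Then J is positive associated to ω if and only if there exists a linear endomorphism P : V → V such that (1) P J₀ = −J₀ P, (2) P is g₀-selfadjoint, (3) 1 − P² is g₀-positive-definite, and J = J₀ (1 + P)(1 − P)⁻¹ (conditions (2) and (3) force 1 − P to be invertible). (Proposition 3.3.) -/
/-!
STATEMENT 4 (Proposition 3.3).

With `g₀` an inner product on `V`, `J₀` a compatible almost complex structure
and `ω (X, Y) := g₀ (J₀ X, Y)`: an almost complex structure `J` is positive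
associated to `ω` (i.e. `ω (J X, J Y) = ω (X, Y)` and `ω (X, J X) > 0` for
`X ≠ 0`) iff there is an endomorphism `P` with `P J₀ = -J₀ P`, `P`
`g₀`-selfadjoint, `1 - P²` `g₀`-positive-definite, and
`J = J₀ (1 + P)(1 - P)⁻¹`.
-/

theorem space_of_associated_metrics.stmt_4
    {V : Type*} [AddCommGroup V] [Module ℝ V] [FiniteDimensional ℝ V]
    (g₀ : V →ₗ[ℝ] V →ₗ[ℝ] ℝ)
    (hg₀sym : ∀ x y, g₀ x y = g₀ y x)
    (hg₀pos : ∀ x, x ≠ 0 → 0 < g₀ x x)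
    (J₀ J : Module.End ℝ V)
    (hJ₀ : J₀ * J₀ = -1) (hJ : J * J = -1)
    (hcomp : ∀ x y, g₀ (J₀ x) (J₀ y) = g₀ x y) :
    ((∀ x y, g₀ (J₀ (J x)) (J y) = g₀ (J₀ x) y) ∧ (∀ x, x ≠ 0 → 0 < g₀ (J₀ x) (J x))) ↔
      (∃ P : Module.End ℝ V,
        P * J₀ = -(J₀ * P) ∧
        (∀ x y, g₀ (P x) y = g₀ x (P y)) ∧
        (∀ x, x ≠ 0 → 0 < g₀ ((1 - P * P) x) x) ∧
        J = J₀ * (1 + P) * Ring.inverse (1 - P)) := by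
  have hJ₀x : ∀ x : V, J₀ (J₀ x) = -x := by
    intro x
    have := DFunLike.congr_fun hJ₀ x
    simpa [Module.End.mul_apply] using this
  have hJx : ∀ x : V, J (J x) = -x := by
    intro x
    have := DFunLike.congr_fun hJ x
    simpa [Module.End.mul_apply] using this
  have hJ₀adj : ∀ a b : V, g₀ a (J₀ b) = -(g₀ (J₀ a) b) := by
    intro a b
    calc g₀ a (J₀ b) = g₀ (J₀ a) (J₀ (J₀ b)) := (hcomp a (J₀ b)).symm
      _ = g₀ (J₀ a) (-b) := by rw [hJ₀x b]
      _ = -(g₀ (J₀ a) b) := by rw [map_neg]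
  constructor
  · rintro ⟨hsym, hpos⟩
    set S : Module.End ℝ V := J₀ + J with hSdef
    set D : Module.End ℝ V := J - J₀ with hDdef
    have hSapp : ∀ x : V, S x = J₀ x + J x := fun x => rfl
    have hDapp : ∀ x : V, D x = J x - J₀ x := fun x => rfl
    -- S is injective, hence a unit
    have hSkey : ∀ x : V, S x = 0 → x = 0 := by
      intro x hx
      by_contra hne
      have h1 : J x = -(J₀ x) := by
        have h := hSapp x
        rw [hx] at h
        exact eq_neg_of_add_eq_zero_right h.symm
      have h2 := hpos x hne
      rw [h1, map_neg] at h2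
      have h3 := hg₀pos x hne
      rw [← hcomp x x] at h3
      linarith
    have hSinj : Function.Injective S := by
      intro a b hab
      have := hSkey (a - b) (by rw [map_sub, hab, sub_self])
      exact sub_eq_zero.mp this
    have hSu : IsUnit S :=
      (Module.End.isUnit_iff S).mpr ⟨hSinj, (LinearMap.injective_iff_surjective).mp hSinj⟩
    obtain ⟨u, hu⟩ := hSu
    set Si : Module.End ℝ V := (↑u⁻¹ : Module.End ℝ V) with hSidef
    have hSiS : Si * S = 1 := by rw [hSidef, ← hu]; exact u.inv_mul
    have hSSi : S * Si = 1 := by rw [hSidef, ← hu]; exact u.mul_inv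
    -- basic ring identities
    have hJ₀S : J₀ * S = S * J := by
      calc J₀ * S = J₀ * J₀ + J₀ * J := by rw [hSdef]; noncomm_ring
        _ = -1 + J₀ * J := by rw [hJ₀]
        _ = J₀ * J + J * J := by rw [hJ]; abel
        _ = S * J := by rw [hSdef]; noncomm_ring
    have hJS : J * S = S * J₀ := by
      calc J * S = J * J₀ + J * J := by rw [hSdef]; noncomm_ring
        _ = J * J₀ + -1 := by rw [hJ]
        _ = J₀ * J₀ + J * J₀ := by rw [hJ₀]; abel
        _ = S * J₀ := by rw [hSdef]; noncomm_ring
    have conj : ∀ A B : Module.End ℝ V, A * S = S * B → Si * A = B * Si := by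
      intro A B hAB
      calc Si * A = Si * A * 1 := by rw [mul_one]
        _ = Si * A * (S * Si) := by rw [hSSi]
        _ = Si * (A * S) * Si := by noncomm_ring
        _ = Si * (S * B) * Si := by rw [hAB]
        _ = B * Si := by rw [← mul_assoc, hSiS, one_mul]
    have hSiJ₀ : Si * J₀ = J * Si := conj J₀ J hJ₀S
    have hSiJ : Si * J = J₀ * Si := conj J J₀ hJS
    have hDS : D * S = S * (-D) := by
      calc D * S = J * J₀ + J * J - (J₀ * J₀ + J₀ * J) := by rw [hDdef, hSdef]; noncomm_ring
        _ = J * J₀ + -1 - (-1 + J₀ * J) := by rw [hJ, hJ₀]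
        _ = -(J₀ * J - J₀ * J₀ + (J * J - J * J₀)) := by rw [hJ₀, hJ]; abel
        _ = S * (-D) := by rw [hSdef, hDdef]; noncomm_ring
    have hSiD : Si * D = -(D * Si) := by
      have := conj D (-D) hDS
      rw [this]; noncomm_ring
    have hDSi : D * Si = -(Si * D) := by rw [hSiD, neg_neg]
    have hDJ₀ : D * J₀ = J * J₀ + 1 := by
      calc D * J₀ = J * J₀ - J₀ * J₀ := by rw [hDdef]; noncomm_ring
        _ = J * J₀ + 1 := by rw [hJ₀]; abel
    have hSJ₀ : S * J₀ = J * J₀ - 1 := by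
      calc S * J₀ = J₀ * J₀ + J * J₀ := by rw [hSdef]; noncomm_ring
        _ = J * J₀ - 1 := by rw [hJ₀]; abel
    set P : Module.End ℝ V := Si * D with hPdef
    refine ⟨P, ?_, ?_, ?_, ?_⟩
    · -- anticommutation
      have h1 : J₀ * P = Si * (J * D) := by
        rw [hPdef, ← mul_assoc, ← hSiJ, mul_assoc]
      have h2 : J * D = -(D * J₀) := by
        calc J * D = J * J - J * J₀ := by rw [hDdef]; noncomm_ring
          _ = -(J * J₀ - J₀ * J₀) := by rw [hJ, hJ₀]; abel
          _ = -(D * J₀) := by rw [hDdef]; noncomm_ring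
      rw [h1, h2, mul_neg, neg_neg, hPdef, mul_assoc]
    · -- selfadjointness
      have hadjJ : ∀ a b : V, g₀ a (J₀ (J (J₀ b))) = g₀ (J a) b := by
        intro a b
        have h1 : g₀ a (J₀ (J (J₀ b))) = -(g₀ (J₀ a) (J (J₀ b))) := hJ₀adj a (J (J₀ b))
        have h2 : g₀ (J₀ a) (J (J₀ b)) = -(g₀ (J₀ (J a)) (J₀ b)) := by
          have h := hsym (-(J a)) (J₀ b)
          simp only [map_neg, LinearMap.neg_apply, hJx a, neg_neg] at h
          exact h
        rw [h1, h2, neg_neg, hcomp]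
      have hadjS : ∀ a b : V, g₀ (S a) b = g₀ a ((J₀ * S * J₀) b) := by
        intro a b
        have e0 : (J₀ * S * J₀) b = J₀ (J₀ (J₀ b)) + J₀ (J (J₀ b)) := by
          simp only [Module.End.mul_apply, hSapp, map_add]
        have e1 : g₀ a (J₀ (J₀ (J₀ b))) = g₀ (J₀ a) b := by
          rw [hJ₀x (J₀ b), map_neg, hJ₀adj a b, neg_neg]
        have e3 : g₀ (S a) b = g₀ (J₀ a) b + g₀ (J a) b := by
          rw [hSapp, map_add, LinearMap.add_apply]
        rw [e0, map_add, e1, hadjJ a b, e3]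
      have hadjD : ∀ a b : V, g₀ (D a) b = g₀ a ((J₀ * D * J₀) b) := by
        intro a b
        have e0 : (J₀ * D * J₀) b = J₀ (J (J₀ b)) - J₀ (J₀ (J₀ b)) := by
          simp only [Module.End.mul_apply, hDapp, map_sub]
        have e1 : g₀ a (J₀ (J₀ (J₀ b))) = g₀ (J₀ a) b := by
          rw [hJ₀x (J₀ b), map_neg, hJ₀adj a b, neg_neg]
        have e3 : g₀ (D a) b = g₀ (J a) b - g₀ (J₀ a) b := by
          rw [hDapp, map_sub, LinearMap.sub_apply]
        rw [e0, map_sub, e1, hadjJ a b, e3]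
      -- T := J₀ * S * J₀ is a unit
      have hJ₀u : IsUnit J₀ :=
        ⟨⟨J₀, -J₀, by rw [mul_neg, hJ₀, neg_neg], by rw [neg_mul, hJ₀, neg_neg]⟩, rfl⟩
      have hTu : IsUnit (J₀ * S * J₀) := (hJ₀u.mul ⟨u, hu⟩).mul hJ₀u
      obtain ⟨t, ht⟩ := hTu
      have hSP : S * P = D := by rw [hPdef, ← mul_assoc, hSSi, one_mul]
      have hPT : P * (J₀ * S * J₀) = J₀ * D * J₀ := by
        have key : (D * J₀) * (S * J₀) = (S * J₀) * (D * J₀) := by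
          rw [hDJ₀, hSJ₀]; noncomm_ring
        calc P * (J₀ * S * J₀) = Si * ((D * J₀) * (S * J₀)) := by
              rw [hPdef]; noncomm_ring
          _ = Si * ((S * J₀) * (D * J₀)) := by rw [key]
          _ = (Si * S) * (J₀ * (D * J₀)) := by noncomm_ring
          _ = J₀ * D * J₀ := by rw [hSiS, one_mul]; noncomm_ring
      intro x y
      have hy : y = (J₀ * S * J₀) ((↑t⁻¹ : Module.End ℝ V) y) := by
        rw [← Module.End.mul_apply, ← ht, Units.mul_inv, Module.End.one_apply]
      set v : V := (↑t⁻¹ : Module.End ℝ V) y with hvdef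
      calc g₀ (P x) y = g₀ (P x) ((J₀ * S * J₀) v) := by rw [← hy]
        _ = g₀ (S (P x)) v := (hadjS (P x) v).symm
        _ = g₀ (D x) v := by rw [← Module.End.mul_apply, hSP]
        _ = g₀ x ((J₀ * D * J₀) v) := hadjD x v
        _ = g₀ x (P ((J₀ * S * J₀) v)) := by
            rw [← hPT, Module.End.mul_apply]
        _ = g₀ x (P y) := by rw [← hy]
    · -- positivity of 1 - P²
      have hDDSS : D * D = -4 - S * S := by
        have c1 : D * D + S * S = 2 * (J * J) + 2 * (J₀ * J₀) := by
          rw [hDdef, hSdef]; noncomm_ring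
        have c2 : D * D + S * S = -4 := by rw [c1, hJ, hJ₀]; norm_num
        rw [eq_sub_iff_add_eq]
        exact c2
      have h4 : (4 : Module.End ℝ V) = (4 : ℝ) • 1 := by
        have : (4 : Module.End ℝ V) = algebraMap ℝ (Module.End ℝ V) 4 := by
          rw [map_ofNat]
        rw [this, Algebra.algebraMap_eq_smul_one]
      have hP2 : 1 - P * P = (-4 : ℝ) • (Si * Si) := by
        have e1 : P * P = -(Si * (Si * (D * D))) := by
          calc P * P = Si * ((D * Si) * D) := by rw [hPdef]; noncomm_ring
            _ = Si * ((-(Si * D)) * D) := by rw [hDSi]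
            _ = -(Si * (Si * (D * D))) := by noncomm_ring
        have e2 : Si * (Si * (S * S)) = 1 := by
          calc Si * (Si * (S * S)) = Si * ((Si * S) * S) := by noncomm_ring
            _ = 1 := by rw [hSiS, one_mul, hSiS]
        calc 1 - P * P = 1 + Si * (Si * (D * D)) := by rw [e1]; noncomm_ring
          _ = 1 + Si * (Si * (-4 - S * S)) := by rw [hDDSS]
          _ = 1 + (Si * (Si * (-4)) - Si * (Si * (S * S))) := by noncomm_ring
          _ = Si * (Si * (-4)) := by rw [e2]; noncomm_ring
          _ = Si * (Si * ((-4 : ℝ) • 1)) := by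
              rw [show ((-4 : Module.End ℝ V)) = (-4 : ℝ) • 1 by rw [neg_smul, ← h4]]
          _ = (-4 : ℝ) • (Si * Si) := by rw [mul_smul_comm, mul_smul_comm, mul_one]
      intro x hx
      set w : V := Si (Si x) with hwdef
      have hxw : x = S (S w) := by
        have e : S * (S * (Si * Si)) = 1 := by
          calc S * (S * (Si * Si)) = S * ((S * Si) * Si) := by noncomm_ring
            _ = 1 := by rw [hSSi, one_mul, hSSi]
        have := DFunLike.congr_fun e x
        simpa [Module.End.mul_apply, hwdef] using this.symm
      have hw0 : w ≠ 0 := by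
        intro h
        apply hx
        rw [hxw, h, map_zero, map_zero]
      have hval : ((1 - P * P) x) = (-4 : ℝ) • w := by
        rw [hP2, LinearMap.smul_apply, Module.End.mul_apply, hwdef]
      rw [hval, map_smul, LinearMap.smul_apply, smul_eq_mul]
      have hexp : g₀ w x = -(g₀ w w) - g₀ w w - g₀ (J₀ w) (J w) - g₀ (J₀ (J₀ w)) (J (J₀ w)) := by
        have hx2 : x = J₀ (J₀ w) + J₀ (J w) + (J (J₀ w) + J (J w)) := by
          rw [hxw, hSapp, hSapp, map_add, map_add]
        rw [hx2]
        rw [map_add, map_add, map_add, hJ₀x w, hJx w, map_neg, map_neg]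
        have t1 : g₀ w (J₀ (J w)) = -(g₀ (J₀ w) (J w)) := hJ₀adj w (J w)
        have t2 : g₀ w (J (J₀ w)) = -(g₀ (J₀ (J₀ w)) (J (J₀ w))) := by
          rw [hJ₀x w, map_neg, LinearMap.neg_apply, neg_neg]
        simp only [map_neg, LinearMap.neg_apply]
        linarith [t1, t2]
      have hw0' : J₀ w ≠ 0 := by
        intro h
        apply hw0
        have := hJ₀x w
        rw [h, map_zero] at this
        exact neg_eq_zero.mp this.symm
      have p1 := hg₀pos w hw0
      have p2 := hpos w hw0
      have p3 := hpos (J₀ w) hw0'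
      nlinarith [hexp]
    · -- the Cayley transform formula
      have hh : ((-1/2 : ℝ) • (-2 : Module.End ℝ V)) = 1 := by
        have h2' : (-2 : Module.End ℝ V) = algebraMap ℝ (Module.End ℝ V) (-2) := by
          rw [map_neg, map_ofNat]
        rw [h2', Algebra.smul_def, ← map_mul]
        norm_num
      have hSmD : S - D = J₀ + J₀ := by rw [hSdef, hDdef]; abel
      have hSpD : S + D = J + J := by rw [hSdef, hDdef]; abel
      have h1M : 1 - P = Si * (J₀ + J₀) := by
        calc 1 - P = Si * S - Si * D := by rw [hSiS, hPdef]
          _ = Si * (S - D) := (mul_sub Si S D).symm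
          _ = Si * (J₀ + J₀) := by rw [hSmD]
      have h1Pp : 1 + P = Si * (J + J) := by
        calc 1 + P = Si * S + Si * D := by rw [hSiS, hPdef]
          _ = Si * (S + D) := (mul_add Si S D).symm
          _ = Si * (J + J) := by rw [hSpD]
      have hJ₀J₀ : (J₀ + J₀) * J₀ = -2 := by
        rw [add_mul, hJ₀]; norm_num
      have hQE : (1 - P) * ((-1/2 : ℝ) • (J₀ * S)) = 1 := by
        rw [h1M, mul_smul_comm]
        have key : (Si * (J₀ + J₀)) * (J₀ * S) = -2 := by
          calc (Si * (J₀ + J₀)) * (J₀ * S) = Si * (((J₀ + J₀) * J₀) * S) := by noncomm_ring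
            _ = Si * ((-2) * S) := by rw [hJ₀J₀]
            _ = Si * (S * (-2)) := by rw [((Commute.ofNat_right S 2).neg_right).eq]
            _ = (Si * S) * (-2) := by noncomm_ring
            _ = -2 := by rw [hSiS, one_mul]
        rw [key]; exact hh
      have hEQ : ((-1/2 : ℝ) • (J₀ * S)) * (1 - P) = 1 := by
        rw [h1M, smul_mul_assoc]
        have key : (J₀ * S) * (Si * (J₀ + J₀)) = -2 := by
          calc (J₀ * S) * (Si * (J₀ + J₀)) = J₀ * ((S * Si) * (J₀ + J₀)) := by noncomm_ring
            _ = J₀ * (J₀ + J₀) := by rw [hSSi, one_mul]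
            _ = -2 := by rw [mul_add, hJ₀]; norm_num
        rw [key]; exact hh
      have hRi : Ring.inverse (1 - P : Module.End ℝ V) = (-1/2 : ℝ) • (J₀ * S) := by
        have : (1 - P : Module.End ℝ V)
            = ((⟨1 - P, (-1/2 : ℝ) • (J₀ * S), hQE, hEQ⟩ : (Module.End ℝ V)ˣ) :
                Module.End ℝ V) := rfl
        rw [this, Ring.inverse_unit]
        rfl
      rw [hRi, h1Pp, mul_smul_comm]
      have core : J₀ * (Si * (J + J)) * (J₀ * S) = (-2) * J := by
        calc J₀ * (Si * (J + J)) * (J₀ * S)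
            = (J₀ * Si) * ((J + J) * (J₀ * S)) := by noncomm_ring
          _ = (Si * J) * ((J + J) * (J₀ * S)) := by rw [hSiJ]
          _ = Si * ((J * (J + J)) * (J₀ * S)) := by noncomm_ring
          _ = Si * ((-2) * (J₀ * S)) := by
              rw [show J * (J + J) = -2 by rw [mul_add, hJ]; norm_num]
          _ = Si * ((J₀ * S) * (-2)) := by
              rw [((Commute.ofNat_right (J₀ * S) 2).neg_right).eq]
          _ = ((Si * J₀) * S) * (-2) := by noncomm_ring
          _ = ((J * Si) * S) * (-2) := by rw [hSiJ₀]
          _ = J * ((Si * S) * (-2)) := by noncomm_ring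
          _ = J * (-2) := by rw [hSiS, one_mul]
          _ = (-2) * J := ((Commute.ofNat_right J 2).neg_right).eq
      rw [core]
      have hfin : ((-2 : Module.End ℝ V)) = (-2 : ℝ) • 1 := by
        rw [show ((-2 : Module.End ℝ V)) = algebraMap ℝ (Module.End ℝ V) (-2) by
          rw [map_neg, map_ofNat], Algebra.algebraMap_eq_smul_one]
      rw [hfin, smul_mul_assoc, one_mul, smul_smul]
      norm_num
  · rintro ⟨P, hPJ₀, hPsa, hPpos, hJeq⟩
    have hfac : (1 + P) * (1 - P) = 1 - P * P := by noncomm_ring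
    have hfac' : (1 - P) * (1 + P) = 1 - P * P := by noncomm_ring
    have hkey : ∀ x : V, (1 - P) x = 0 → x = 0 := by
      intro x hx
      by_contra hne
      have h1 : (1 - P * P) x = 0 := by
        rw [← hfac, Module.End.mul_apply, hx, map_zero]
      have h2 := hPpos x hne
      rw [h1] at h2
      simp at h2
    have hinj : Function.Injective (1 - P : Module.End ℝ V) := by
      intro a b hab
      exact sub_eq_zero.mp (hkey (a - b) (by rw [map_sub, hab, sub_self]))
    have hQu : IsUnit (1 - P : Module.End ℝ V) :=
      (Module.End.isUnit_iff _).mpr ⟨hinj, (LinearMap.injective_iff_surjective).mp hinj⟩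
    obtain ⟨q, hq⟩ := hQu
    set Qi : Module.End ℝ V := (↑q⁻¹ : Module.End ℝ V) with hQidef
    have hQQi : (1 - P) * Qi = 1 := by rw [hQidef, ← hq]; exact q.mul_inv
    have hQiQ : Qi * (1 - P) = 1 := by rw [hQidef, ← hq]; exact q.inv_mul
    have hRinv : Ring.inverse (1 - P : Module.End ℝ V) = Qi := by
      rw [← hq, Ring.inverse_unit]
    rw [hRinv] at hJeq
    have hJQ : J * (1 - P) = J₀ * (1 + P) := by
      rw [hJeq, mul_assoc, hQiQ, mul_one]
    -- anticommutation
    have hJ₀P : J₀ * P = -(P * J₀) := by rw [hPJ₀, neg_neg]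
    have hA1 : J₀ * (1 + P) = (1 - P) * J₀ := by
      calc J₀ * (1 + P) = J₀ + J₀ * P := by noncomm_ring
        _ = J₀ + -(P * J₀) := by rw [hJ₀P]
        _ = (1 - P) * J₀ := by noncomm_ring
    have hA2 : J₀ * (1 - P) = (1 + P) * J₀ := by
      calc J₀ * (1 - P) = J₀ - J₀ * P := by noncomm_ring
        _ = J₀ - -(P * J₀) := by rw [hJ₀P]
        _ = (1 + P) * J₀ := by noncomm_ring
    have hPPJ₀ : (P * P) * J₀ = J₀ * (P * P) := by
      calc (P * P) * J₀ = P * (P * J₀) := by noncomm_ring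
        _ = P * (-(J₀ * P)) := by rw [hPJ₀]
        _ = (-(P * J₀)) * P := by noncomm_ring
        _ = (-(-(J₀ * P))) * P := by rw [hPJ₀]
        _ = J₀ * (P * P) := by noncomm_ring
    have hcommJ₀ : J₀ * (1 - P * P) = (1 - P * P) * J₀ := by
      calc J₀ * (1 - P * P) = J₀ - J₀ * (P * P) := by noncomm_ring
        _ = J₀ - (P * P) * J₀ := by rw [hPPJ₀]
        _ = (1 - P * P) * J₀ := by noncomm_ring
    -- selfadjointness helpers, pointwise
    have hsa1M : ∀ c d : V, g₀ ((1 - P) c) d = g₀ c ((1 - P) d) := by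
      intro c d
      simp only [LinearMap.sub_apply, Module.End.one_apply, map_sub, LinearMap.sub_apply]
      rw [hPsa c d]
    have hsa1P : ∀ c d : V, g₀ ((1 + P) c) d = g₀ c ((1 + P) d) := by
      intro c d
      simp only [LinearMap.add_apply, Module.End.one_apply, map_add, LinearMap.add_apply]
      rw [hPsa c d]
    have hsa2 : ∀ c d : V, g₀ ((1 - P * P) c) d = g₀ c ((1 - P * P) d) := by
      intro c d
      simp only [LinearMap.sub_apply, Module.End.one_apply, Module.End.mul_apply, map_sub,
        LinearMap.sub_apply]
      rw [hPsa (P c) d, hPsa c (P d)]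
    -- pointwise versions of the operator identities
    have happ : ∀ (A B : Module.End ℝ V), A = B → ∀ x : V, A x = B x := by
      intro A B h x; rw [h]
    constructor
    · intro x y
      have hxa : x = (1 - P) (Qi x) := by
        have := happ _ _ hQQi x
        simp only [Module.End.mul_apply, Module.End.one_apply] at this
        exact this.symm
      have hyb : y = (1 - P) (Qi y) := by
        have := happ _ _ hQQi y
        simp only [Module.End.mul_apply, Module.End.one_apply] at this
        exact this.symm
      set a : V := Qi x
      set b : V := Qi y
      have hJxa : J x = J₀ ((1 + P) a) := by
        conv_lhs => rw [hxa]
        have := happ _ _ hJQ a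
        simp only [Module.End.mul_apply] at this
        exact this
      have hJyb : J y = J₀ ((1 + P) b) := by
        conv_lhs => rw [hyb]
        have := happ _ _ hJQ b
        simp only [Module.End.mul_apply] at this
        exact this
      have hJ₀x' : ∀ z : V, J₀ (J₀ z) = -z := by
        intro z
        have := DFunLike.congr_fun hJ₀ z
        simpa [Module.End.mul_apply] using this
      have hA1app : ∀ z : V, J₀ ((1 + P) z) = (1 - P) (J₀ z) := by
        intro z
        have := happ _ _ hA1 z
        simpa only [Module.End.mul_apply] using this
      have hA2app : ∀ z : V, J₀ ((1 - P) z) = (1 + P) (J₀ z) := by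
        intro z
        have := happ _ _ hA2 z
        simpa only [Module.End.mul_apply] using this
      have hfacapp : ∀ z : V, (1 + P) ((1 - P) z) = (1 - P * P) z := by
        intro z
        have := happ _ _ hfac z
        simpa only [Module.End.mul_apply] using this
      have hfacapp' : ∀ z : V, (1 - P) ((1 + P) z) = (1 - P * P) z := by
        intro z
        have := happ _ _ hfac' z
        simpa only [Module.End.mul_apply] using this
      have hcommapp : ∀ z : V, J₀ ((1 - P * P) z) = (1 - P * P) (J₀ z) := by
        intro z
        have := happ _ _ hcommJ₀ z
        simpa only [Module.End.mul_apply] using this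
      calc g₀ (J₀ (J x)) (J y)
          = g₀ (J₀ (J₀ ((1 + P) a))) (J₀ ((1 + P) b)) := by rw [hJxa, hJyb]
        _ = g₀ (-((1 + P) a)) ((1 - P) (J₀ b)) := by rw [hJ₀x' ((1 + P) a), hA1app b]
        _ = -(g₀ ((1 + P) a) ((1 - P) (J₀ b))) := by
            rw [map_neg, LinearMap.neg_apply]
        _ = -(g₀ ((1 - P) ((1 + P) a)) (J₀ b)) := by rw [hsa1M ((1 + P) a) (J₀ b)]
        _ = -(g₀ ((1 - P * P) a) (J₀ b)) := by rw [hfacapp' a]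
        _ = g₀ (J₀ ((1 - P * P) a)) b := by rw [hJ₀adj ((1 - P * P) a) b, neg_neg]
        _ = g₀ ((1 - P * P) (J₀ a)) b := by rw [hcommapp a]
        _ = g₀ (J₀ a) ((1 - P * P) b) := hsa2 (J₀ a) b
        _ = g₀ (J₀ a) ((1 + P) ((1 - P) b)) := by rw [hfacapp b]
        _ = g₀ ((1 + P) (J₀ a)) ((1 - P) b) := (hsa1P (J₀ a) ((1 - P) b)).symm
        _ = g₀ (J₀ ((1 - P) a)) ((1 - P) b) := by rw [hA2app a]
        _ = g₀ (J₀ x) y := by rw [← hxa, ← hyb]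
    · intro x hx
      have hxa : x = (1 - P) (Qi x) := by
        have := happ _ _ hQQi x
        simp only [Module.End.mul_apply, Module.End.one_apply] at this
        exact this.symm
      set a : V := Qi x
      have ha0 : a ≠ 0 := by
        intro h
        apply hx
        rw [hxa, h, map_zero]
      have hJxa : J x = J₀ ((1 + P) a) := by
        conv_lhs => rw [hxa]
        have := happ _ _ hJQ a
        simp only [Module.End.mul_apply] at this
        exact this
      have hval : g₀ (J₀ x) (J x) = g₀ ((1 - P) a) ((1 + P) a) := by
        conv_lhs => rw [hJxa, hxa]
        exact hcomp ((1 - P) a) ((1 + P) a)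
      have hexp : g₀ ((1 - P) a) ((1 + P) a) = g₀ a a - g₀ (P a) (P a) := by
        simp only [LinearMap.sub_apply, LinearMap.add_apply, Module.End.one_apply, map_sub,
          map_add, LinearMap.sub_apply, LinearMap.add_apply]
        have := hg₀sym a (P a)
        linarith [hg₀sym (P a) a]
      have hp := hPpos a ha0
      have hexp2 : g₀ ((1 - P * P) a) a = g₀ a a - g₀ (P a) (P a) := by
        simp only [LinearMap.sub_apply, Module.End.one_apply, Module.End.mul_apply, map_sub,
          LinearMap.sub_apply]
        rw [hPsa (P a) a]
      rw [hval, hexp]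
      rw [hexp2] at hp
      exact hp
end

section
/- Suppose J₀ is compatible with g₀. The relation J = J₀ ∘ exp(P) defines a one-to-one correspondence between the set of g₀-selfadjoint endomorphisms P of V that anticommute with J₀ (P J₀ = −J₀ P) and the set of almost complex structures J on V that are positive associated to ω; i.e. for every such P, J₀ ∘ exp(P) is a positive associated almost complex structure, and for every positive associated almost complex structure J there is a unique g₀-selfadjoint P with P J₀ = −J₀ P and J = J₀ ∘ exp(P). (Proposition 3.4.) -/
/-!
STATEMENT 5 (Proposition 3.4).

With `g₀` an inner product on the finite-dimensional real vector space `V`,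
`J₀` a compatible almost complex structure and `ω (X, Y) := g₀ (J₀ X, Y)`:
the relation `J = J₀ ∘ exp P` is a one-to-one correspondence between
`g₀`-selfadjoint endomorphisms `P` anticommuting with `J₀` and almost complex
structures `J` positive associated to `ω`.  We use continuous linear
endomorphisms of a finite-dimensional normed space so that the endomorphism
exponential `NormedSpace.exp ℝ` is available.
-/

open scoped RealInnerProductSpace
set_option linter.unusedSectionVars false
set_option maxHeartbeats 1000000
set_option synthInstance.maxHeartbeats 400000

noncomputable section SOAM

namespace SOAMAux

/-- Type synonym used to endow `V` with the inner product coming from `g₀`. -/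
def Vc (V : Type*) : Type _ := V

instance {V : Type*} [AddCommGroup V] : AddCommGroup (Vc V) := ‹AddCommGroup V›
instance {V : Type*} [AddCommGroup V] [Module ℝ V] : Module ℝ (Vc V) := ‹Module ℝ V›

def toVc (V : Type*) [AddCommGroup V] [Module ℝ V] : V ≃ₗ[ℝ] Vc V := LinearEquiv.refl ℝ V

section InnerLand

variable {E : Type*} [NormedAddCommGroup E] [InnerProductSpace ℝ E] [FiniteDimensional ℝ E]

lemma pow_apply_eig (T : E →L[ℝ] E) {v : E} {μ : ℝ} (h : T v = μ • v) (k : ℕ) :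
    (T ^ k) v = μ ^ k • v := by
  induction k with
  | zero => simp
  | succ k ih =>
      rw [pow_succ, pow_succ, ContinuousLinearMap.mul_apply, h, map_smul, ih, smul_smul, mul_comm]

lemma exp_apply_eig (T : E →L[ℝ] E) {v : E} {μ : ℝ} (h : T v = μ • v) :
    NormedSpace.exp T v = Real.exp μ • v := by
  have hsum : Summable fun n : ℕ => ((n.factorial : ℝ))⁻¹ • T ^ n := NormedSpace.expSeries_summable' T
  have h1 : NormedSpace.exp T v = ∑' n : ℕ, (((n.factorial : ℝ))⁻¹ • T ^ n) v := by
    simp only [NormedSpace.exp_eq_tsum ℝ]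
    exact (ContinuousLinearMap.apply ℝ E v).map_tsum hsum
  have h2 : ∀ n : ℕ, (((n.factorial : ℝ))⁻¹ • T ^ n) v = (((n.factorial : ℝ))⁻¹ * μ ^ n) • v := by
    intro n
    rw [ContinuousLinearMap.smul_apply, pow_apply_eig T h n, smul_smul]
  have hsum2 : Summable fun n : ℕ => ((n.factorial : ℝ))⁻¹ * μ ^ n := by
    simpa [smul_eq_mul] using NormedSpace.expSeries_summable' (𝕂 := ℝ) μ
  rw [h1]
  simp_rw [h2]
  rw [hsum2.tsum_smul_const]
  congr 1
  rw [Real.exp_eq_exp_ℝ]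
  simp only [NormedSpace.exp_eq_tsum ℝ, smul_eq_mul]


lemma eig_of_exp (T : E →L[ℝ] E) (hT : (T : E →ₗ[ℝ] E).IsSymmetric) {v : E} {μ : ℝ}
    (h : NormedSpace.exp T v = Real.exp μ • v) : T v = μ • v := by
  classical
  have hn : Module.finrank ℝ E = Module.finrank ℝ E := rfl
  set b := hT.eigenvectorBasis hn with hbdef
  set ev := hT.eigenvalues hn with hevdef
  have hb : ∀ i, T (b i) = ev i • b i := fun i => hT.apply_eigenvectorBasis hn i
  set c : Fin (Module.finrank ℝ E) → ℝ := fun i => b.repr v i with hcdef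
  have hv : (∑ i, c i • b i) = v := b.sum_repr v
  have hexpb : ∀ i, NormedSpace.exp T (b i) = Real.exp (ev i) • b i :=
    fun i => exp_apply_eig T (hb i)
  have compute1 : NormedSpace.exp T v = ∑ i, (c i * Real.exp (ev i)) • b i := by
    conv_lhs => rw [← hv]
    rw [map_sum]
    refine Finset.sum_congr rfl fun i _ => ?_
    rw [map_smul, hexpb i, smul_smul]
  have compute2 : Real.exp μ • v = ∑ i, (Real.exp μ * c i) • b i := by
    rw [← hv, Finset.smul_sum]
    exact Finset.sum_congr rfl fun i _ => by rw [smul_smul]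
  have hzero : (∑ i, (c i * Real.exp (ev i) - Real.exp μ * c i) • b i) = 0 := by
    simp only [sub_smul, Finset.sum_sub_distrib]
    rw [← compute1, ← compute2, h, sub_self]
  have li := b.toBasis.linearIndependent
  rw [Fintype.linearIndependent_iff] at li
  have key : ∀ i, c i * Real.exp (ev i) - Real.exp μ * c i = 0 := by
    refine li _ ?_
    simpa only [OrthonormalBasis.coe_toBasis] using hzero
  have key2 : ∀ i, c i * ev i = μ * c i := by
    intro i
    rcases eq_or_ne (c i) 0 with h0 | h0
    · simp [h0]
    · have h1 := key i
      have h2 : Real.exp (ev i) = Real.exp μ := by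
        have h3 : c i * (Real.exp (ev i) - Real.exp μ) = 0 := by ring_nf; linarith [h1]
        rcases mul_eq_zero.mp h3 with h4 | h4
        · exact absurd h4 h0
        · linarith [h4]
      have h5 : ev i = μ := Real.exp_injective h2
      rw [h5, mul_comm]
  calc T v = ∑ i, (c i * ev i) • b i := by
        conv_lhs => rw [← hv]
        rw [map_sum]
        exact Finset.sum_congr rfl fun i _ => by rw [map_smul, hb i, smul_smul]
    _ = ∑ i, (μ * c i) • b i := Finset.sum_congr rfl fun i _ => by rw [key2 i]
    _ = μ • v := by
        rw [← hv, Finset.smul_sum]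
        exact Finset.sum_congr rfl fun i _ => by rw [smul_smul]

lemma exp_inj_symm {T₁ T₂ : E →L[ℝ] E} (h₁ : (T₁ : E →ₗ[ℝ] E).IsSymmetric)
    (h₂ : (T₂ : E →ₗ[ℝ] E).IsSymmetric)
    (h : NormedSpace.exp T₁ = NormedSpace.exp T₂) : T₁ = T₂ := by
  classical
  have hn : Module.finrank ℝ E = Module.finrank ℝ E := rfl
  set b := h₂.eigenvectorBasis hn with hbdef
  set ev := h₂.eigenvalues hn with hevdef
  have hb : ∀ i, T₂ (b i) = ev i • b i := fun i => h₂.apply_eigenvectorBasis hn i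
  apply ContinuousLinearMap.coe_injective
  apply b.toBasis.ext
  intro i
  simp only [OrthonormalBasis.coe_toBasis, ContinuousLinearMap.coe_coe]
  have hx : NormedSpace.exp T₁ (b i) = Real.exp (ev i) • b i := by
    rw [h]; exact exp_apply_eig T₂ (hb i)
  rw [eig_of_exp T₁ h₁ hx, hb i]

lemma log_exists (S : E →L[ℝ] E) (hS : (S : E →ₗ[ℝ] E).IsSymmetric)
    (hpos : ∀ x, x ≠ 0 → (0:ℝ) < ⟪S x, x⟫) :
    ∃ P : E →L[ℝ] E, (P : E →ₗ[ℝ] E).IsSymmetric ∧ NormedSpace.exp P = S := by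
  classical
  have hn : Module.finrank ℝ E = Module.finrank ℝ E := rfl
  set b := hS.eigenvectorBasis hn with hbdef
  set ev := hS.eigenvalues hn with hevdef
  have hb : ∀ i, S (b i) = ev i • b i := fun i => hS.apply_eigenvectorBasis hn i
  have hbne : ∀ i, b i ≠ 0 := fun i => b.toBasis.ne_zero i
  have hevpos : ∀ i, 0 < ev i := by
    intro i
    have h1 := hpos (b i) (hbne i)
    rw [hb i, real_inner_smul_left, real_inner_self_eq_norm_sq, b.orthonormal.1 i] at h1
    simpa using h1
  set s : Finset ℝ := Finset.image ev Finset.univ with hsdef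
  set p : Polynomial ℝ := Lagrange.interpolate s id Real.log with hpdef
  have hp : ∀ i, p.eval (ev i) = Real.log (ev i) := by
    intro i
    have hmem : ev i ∈ s := Finset.mem_image_of_mem _ (Finset.mem_univ i)
    have := Lagrange.eval_interpolate_at_node (r := Real.log) (v := id)
      (Set.injOn_id _) hmem
    exact this
  set P : E →L[ℝ] E := Polynomial.aeval S p with hPdef
  have haeval : ∀ x : E, P x =
      ∑ k ∈ Finset.range (p.natDegree + 1), p.coeff k • (S ^ k) x := by
    intro x
    rw [hPdef, Polynomial.aeval_eq_sum_range]
    simp [ContinuousLinearMap.sum_apply]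
  have hPb : ∀ i, P (b i) = Real.log (ev i) • b i := by
    intro i
    rw [haeval]
    have : ∀ k, p.coeff k • (S ^ k) (b i) = (p.coeff k * ev i ^ k) • b i := by
      intro k
      rw [pow_apply_eig S (hb i) k, smul_smul]
    simp_rw [this]
    rw [← Finset.sum_smul, ← hp i]
    congr 1
    rw [Polynomial.eval_eq_sum_range]
  have hpow : ∀ k : ℕ, ((S ^ k : E →L[ℝ] E) : E →ₗ[ℝ] E).IsSymmetric := by
    intro k
    induction k with
    | zero => intro x y; simp
    | succ k ih =>
        intro x y
        simp only [ContinuousLinearMap.coe_coe]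
        have e1 : (S ^ (k+1)) x = (S ^ k) (S x) := by
          rw [pow_succ]; rfl
        have e2 : (S ^ (k+1)) y = S ((S ^ k) y) := by
          rw [pow_succ']; rfl
        rw [e1, e2]
        calc ⟪(S ^ k) (S x), y⟫ = ⟪S x, (S ^ k) y⟫ := ih (S x) y
          _ = ⟪x, S ((S ^ k) y)⟫ := hS x ((S ^ k) y)
  have hPsym : (P : E →ₗ[ℝ] E).IsSymmetric := by
    intro x y
    simp only [ContinuousLinearMap.coe_coe]
    rw [haeval x, haeval y, sum_inner, inner_sum]
    refine Finset.sum_congr rfl fun k _ => ?_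
    rw [real_inner_smul_left, real_inner_smul_right]
    exact congrArg (p.coeff k * ·) (hpow k x y)
  refine ⟨P, hPsym, ?_⟩
  apply ContinuousLinearMap.coe_injective
  apply b.toBasis.ext
  intro i
  simp only [OrthonormalBasis.coe_toBasis, ContinuousLinearMap.coe_coe]
  rw [exp_apply_eig P (hPb i), Real.exp_log (hevpos i), hb i]

end InnerLand

section Transfer

variable {V : Type*} [NormedAddCommGroup V] [NormedSpace ℝ V] [FiniteDimensional ℝ V]

def coreOf (g₀ : V →ₗ[ℝ] V →ₗ[ℝ] ℝ) (hg₀sym : ∀ x y, g₀ x y = g₀ y x)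
    (hg₀pos : ∀ x, x ≠ 0 → 0 < g₀ x x) : InnerProductSpace.Core ℝ (Vc V) where
  inner x y := g₀ x y
  conj_inner_symm x y := by simpa using hg₀sym y x
  re_inner_nonneg x := by
    rcases eq_or_ne x 0 with h | h
    · simp [h]; exact le_of_eq (LinearMap.map_zero₂ g₀ (0:V)).symm
    · exact le_of_lt (by simpa using hg₀pos x h)
  add_left x y z := LinearMap.map_add₂ g₀ x y z
  smul_left x y r := LinearMap.map_smul₂ g₀ r x y
  definite x hx := by
    by_contra h
    exact absurd hx (ne_of_gt (hg₀pos x h))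

theorem log_g0 (g₀ : V →ₗ[ℝ] V →ₗ[ℝ] ℝ) (hg₀sym : ∀ x y, g₀ x y = g₀ y x)
    (hg₀pos : ∀ x, x ≠ 0 → 0 < g₀ x x) :
    (∀ P₁ P₂ : V →L[ℝ] V, (∀ x y, g₀ (P₁ x) y = g₀ x (P₁ y)) →
      (∀ x y, g₀ (P₂ x) y = g₀ x (P₂ y)) →
      NormedSpace.exp P₁ = NormedSpace.exp P₂ → P₁ = P₂) ∧
    (∀ S : V →L[ℝ] V, (∀ x y, g₀ (S x) y = g₀ x (S y)) → (∀ x, x ≠ 0 → 0 < g₀ (S x) x) →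
      ∃ P : V →L[ℝ] V, (∀ x y, g₀ (P x) y = g₀ x (P y)) ∧ NormedSpace.exp P = S) := by
  letI c : InnerProductSpace.Core ℝ (Vc V) := coreOf g₀ hg₀sym hg₀pos
  letI : NormedAddCommGroup (Vc V) := InnerProductSpace.Core.toNormedAddCommGroup (𝕜 := ℝ) (F := Vc V)
  letI : InnerProductSpace ℝ (Vc V) := InnerProductSpace.ofCore c.toCore
  letI : FiniteDimensional ℝ (Vc V) := Module.Finite.equiv (toVc V)
  letI : NormedSpace ℝ (Vc V) := InnerProductSpace.toNormedSpace (𝕜 := ℝ)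
  letI : NormedRing ((Vc V) →L[ℝ] (Vc V)) := inferInstance
  letI : IsTopologicalRing ((Vc V) →L[ℝ] (Vc V)) := NonUnitalSeminormedRing.toIsTopologicalRing
  letI : NormedAlgebra ℚ (V →L[ℝ] V) := NormedAlgebra.restrictScalars ℚ ℝ _
  letI : NormedAlgebra ℚ ((Vc V) →L[ℝ] (Vc V)) := NormedAlgebra.restrictScalars ℚ ℝ _
  let e : V ≃L[ℝ] Vc V := (toVc V).toContinuousLinearEquiv
  let Φ : (V →L[ℝ] V) ≃L[ℝ] ((Vc V) →L[ℝ] (Vc V)) := e.arrowCongr e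
  have hΦapp : ∀ (T : V →L[ℝ] V) (x : Vc V), Φ T x = T x := fun T x => rfl
  have hinner : ∀ x y : Vc V, (inner ℝ x y : ℝ) = g₀ x y := fun x y => rfl
  have hΦmul : ∀ T₁ T₂ : V →L[ℝ] V, Φ (T₁ * T₂) = Φ T₁ * Φ T₂ := fun T₁ T₂ => rfl
  let Ψ : (V →L[ℝ] V) ≃+* ((Vc V) →L[ℝ] (Vc V)) :=
    { toFun := Φ, invFun := Φ.symm, left_inv := Φ.symm_apply_apply,
      right_inv := Φ.apply_symm_apply, map_add' := fun a b => map_add Φ a b,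
      map_mul' := hΦmul }
  have hΨexp : ∀ T : V →L[ℝ] V, Φ (NormedSpace.exp T) = NormedSpace.exp (Φ T) :=
    fun T => NormedSpace.map_exp Ψ Φ.continuous T
  have hsym_transfer : ∀ T : V →L[ℝ] V, (∀ x y, g₀ (T x) y = g₀ x (T y)) →
      ((Φ T : Vc V →L[ℝ] Vc V) : Vc V →ₗ[ℝ] Vc V).IsSymmetric := by
    intro T hT x y
    show (inner ℝ (Φ T x) y : ℝ) = inner ℝ x (Φ T y)
    rw [hinner, hinner, hΦapp, hΦapp]
    exact hT x y
  constructor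
  · intro P₁ P₂ h₁ h₂ hexp
    refine Φ.injective (exp_inj_symm (hsym_transfer P₁ h₁) (hsym_transfer P₂ h₂) ?_)
    exact (hΨexp P₁).symm.trans ((congrArg Φ hexp).trans (hΨexp P₂))
  · intro S hSsym hSpos
    have hpos' : ∀ x : Vc V, x ≠ 0 → (0:ℝ) < inner ℝ ((Φ S) x) x := by
      intro x hx
      have : (0:ℝ) < g₀ (S x) x := hSpos x hx
      rw [hinner, hΦapp]
      exact this
    obtain ⟨P', hP'sym, hP'exp⟩ := log_exists (Φ S) (hsym_transfer S hSsym) hpos'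
    refine ⟨Φ.symm P', ?_, ?_⟩
    · intro x y
      have h := hP'sym x y
      have hP'x : ∀ z : Vc V, P' z = (Φ.symm P') z := by
        intro z
        conv_lhs => rw [← Φ.apply_symm_apply P']
        rw [hΦapp]
      change g₀ (P' x) y = g₀ x (P' y) at h
      rw [← hP'x x, ← hP'x y]
      exact h
    · apply Φ.injective
      rw [hΨexp, Φ.apply_symm_apply]; exact hP'exp

end Transfer

end SOAMAux

end SOAM

open SOAMAux in
theorem space_of_associated_metrics.stmt_5
    {V : Type*} [NormedAddCommGroup V] [NormedSpace ℝ V] [FiniteDimensional ℝ V]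
    (g₀ : V →ₗ[ℝ] V →ₗ[ℝ] ℝ)
    (hg₀sym : ∀ x y, g₀ x y = g₀ y x)
    (hg₀pos : ∀ x, x ≠ 0 → 0 < g₀ x x)
    (J₀ : V →L[ℝ] V)
    (hJ₀ : J₀ * J₀ = -1)
    (hcomp : ∀ x y, g₀ (J₀ x) (J₀ y) = g₀ x y) :
    (∀ P : V →L[ℝ] V, (∀ x y, g₀ (P x) y = g₀ x (P y)) → P * J₀ = -(J₀ * P) →
      ((J₀ * NormedSpace.exp P) * (J₀ * NormedSpace.exp P) = -1 ∧
       (∀ x y, g₀ (J₀ ((J₀ * NormedSpace.exp P) x)) ((J₀ * NormedSpace.exp P) y)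
          = g₀ (J₀ x) y) ∧
       (∀ x, x ≠ 0 → 0 < g₀ (J₀ x) ((J₀ * NormedSpace.exp P) x)))) ∧
    (∀ J : V →L[ℝ] V, J * J = -1 →
      (∀ x y, g₀ (J₀ (J x)) (J y) = g₀ (J₀ x) y) →
      (∀ x, x ≠ 0 → 0 < g₀ (J₀ x) (J x)) →
      ∃! P : V →L[ℝ] V,
        (∀ x y, g₀ (P x) y = g₀ x (P y)) ∧ P * J₀ = -(J₀ * P) ∧
        J = J₀ * NormedSpace.exp P) := by
  classical
  letI : FiniteDimensional ℝ (V →L[ℝ] V) :=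
    Module.Finite.equiv (LinearMap.toContinuousLinearMap : (V →ₗ[ℝ] V) ≃ₗ[ℝ] (V →L[ℝ] V))
  letI : NormedAlgebra ℚ (V →L[ℝ] V) := NormedAlgebra.restrictScalars ℚ ℝ _
  -- basic identities
  have hJ₀J₀ : ∀ y : V, J₀ (J₀ y) = -y := by
    intro y
    have h : (J₀ * J₀) y = (-1 : V →L[ℝ] V) y := by rw [hJ₀]
    simpa using h
  have hgJ : ∀ x y : V, g₀ (J₀ x) y = -(g₀ x (J₀ y)) := by
    intro x y
    calc g₀ (J₀ x) y = g₀ (J₀ x) (-(J₀ (J₀ y))) := by rw [hJ₀J₀, neg_neg]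
      _ = -(g₀ (J₀ x) (J₀ (J₀ y))) := by simp
      _ = -(g₀ x (J₀ y)) := by rw [hcomp]
  have hJ₀negJ₀ : J₀ * -J₀ = 1 := by rw [mul_neg, hJ₀, neg_neg]
  have hnegJ₀J₀ : -J₀ * J₀ = 1 := by rw [neg_mul, hJ₀, neg_neg]
  let u : (V →L[ℝ] V)ˣ := ⟨J₀, -J₀, hJ₀negJ₀, hnegJ₀J₀⟩
  have hcu : ((u⁻¹ : (V →L[ℝ] V)ˣ) : V →L[ℝ] V) = -J₀ := rfl
  have hcu2 : ((u : (V →L[ℝ] V)ˣ) : V →L[ℝ] V) = J₀ := rfl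
  -- exp of a g₀-selfadjoint operator is g₀-selfadjoint
  have hexp_sym : ∀ P : V →L[ℝ] V, (∀ x y, g₀ (P x) y = g₀ x (P y)) →
      ∀ x y, g₀ (NormedSpace.exp P x) y = g₀ x (NormedSpace.exp P y) := by
    intro P hP x y
    have hpow : ∀ n : ℕ, ∀ a b : V, g₀ ((P ^ n) a) b = g₀ a ((P ^ n) b) := by
      intro n
      induction n with
      | zero => intro a b; simp
      | succ n ih =>
          intro a b
          have e1 : (P ^ (n+1)) a = (P ^ n) (P a) := by rw [pow_succ]; rfl
          have e2 : (P ^ (n+1)) b = P ((P ^ n) b) := by rw [pow_succ']; rfl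
          rw [e1, e2]
          calc g₀ ((P ^ n) (P a)) b = g₀ (P a) ((P ^ n) b) := ih (P a) b
            _ = g₀ a (P ((P ^ n) b)) := hP a ((P ^ n) b)
    let L : (V →L[ℝ] V) →ₗ[ℝ] ℝ :=
      { toFun := fun T => g₀ (T x) y - g₀ x (T y)
        map_add' := by intro a b; simp [ContinuousLinearMap.add_apply]; ring
        map_smul' := by intro r a; simp [ContinuousLinearMap.smul_apply]; ring }
    let Lc : (V →L[ℝ] V) →L[ℝ] ℝ := LinearMap.toContinuousLinearMap L
    have hsum : Summable fun n : ℕ => ((n.factorial : ℝ))⁻¹ • P ^ n :=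
      NormedSpace.expSeries_summable' P
    have hmap : Lc (NormedSpace.exp P) =
        ∑' n : ℕ, Lc (((n.factorial : ℝ))⁻¹ • P ^ n) := by
      simp only [NormedSpace.exp_eq_tsum ℝ]
      exact Lc.map_tsum hsum
    have hterm : ∀ n : ℕ, Lc (((n.factorial : ℝ))⁻¹ • P ^ n) = 0 := by
      intro n
      have h1 : Lc (((n.factorial : ℝ))⁻¹ • P ^ n) =
          ((n.factorial : ℝ))⁻¹ * (g₀ ((P ^ n) x) y - g₀ x ((P ^ n) y)) := by
        have := Lc.map_smul (((n.factorial : ℝ))) (P ^ n)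
        simp only [map_smul, smul_eq_mul]
        rfl
      rw [h1, hpow n x y, sub_self, mul_zero]
    have h0 : Lc (NormedSpace.exp P) = 0 := by
      rw [hmap]
      simp [hterm]
    have h1 : g₀ (NormedSpace.exp P x) y - g₀ x (NormedSpace.exp P y) = 0 := h0
    linarith [h1]
  -- conjugation identity
  have hexp_conj : ∀ P : V →L[ℝ] V, P * J₀ = -(J₀ * P) →
      NormedSpace.exp P * J₀ = J₀ * NormedSpace.exp (-P) := by
    intro P hanti
    have h1 : (-J₀) * P * J₀ = -P := by
      calc (-J₀) * P * J₀ = -(J₀ * (P * J₀)) := by rw [neg_mul, neg_mul, mul_assoc]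
        _ = -(J₀ * -(J₀ * P)) := by rw [hanti]
        _ = (J₀ * J₀) * P := by rw [mul_neg, neg_neg, mul_assoc]
        _ = -P := by rw [hJ₀, neg_one_mul]
    have hconj := NormedSpace.exp_units_conj' u P
    rw [hcu, hcu2, h1] at hconj
    rw [hconj, ← mul_assoc, ← mul_assoc, hJ₀negJ₀, one_mul]
  have hexp_neg : ∀ P : V →L[ℝ] V,
      NormedSpace.exp (-P) * NormedSpace.exp P = 1 ∧
      NormedSpace.exp P * NormedSpace.exp (-P) = 1 := by
    intro P
    constructor
    · rw [← NormedSpace.exp_add_of_commute (Commute.refl P).neg_left, neg_add_cancel,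
        NormedSpace.exp_zero]
    · rw [← NormedSpace.exp_add_of_commute (Commute.refl P).neg_right, add_neg_cancel,
        NormedSpace.exp_zero]
  constructor
  · -- forward direction
    intro P hPsym hPanti
    have hconj := hexp_conj P hPanti
    have hinv := hexp_neg P
    have hkey : NormedSpace.exp P * (J₀ * NormedSpace.exp P) = J₀ := by
      rw [← mul_assoc, hconj, mul_assoc, (hexp_neg P).1, mul_one]
    refine ⟨?_, ?_, ?_⟩
    · calc (J₀ * NormedSpace.exp P) * (J₀ * NormedSpace.exp P)
          = J₀ * (NormedSpace.exp P * (J₀ * NormedSpace.exp P)) := by rw [mul_assoc]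
        _ = J₀ * J₀ := by rw [hkey]
        _ = -1 := hJ₀
    · intro x y
      have hA : J₀ ((J₀ * NormedSpace.exp P) x) = -(NormedSpace.exp P x) := by
        have h : J₀ * (J₀ * NormedSpace.exp P) = -(NormedSpace.exp P) := by
          rw [← mul_assoc, hJ₀, neg_one_mul]
        calc J₀ ((J₀ * NormedSpace.exp P) x) = (J₀ * (J₀ * NormedSpace.exp P)) x := rfl
          _ = -(NormedSpace.exp P x) := by rw [h]; rfl
      have hB : NormedSpace.exp P (J₀ (NormedSpace.exp P y)) = J₀ y := by
        calc NormedSpace.exp P (J₀ (NormedSpace.exp P y))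
            = (NormedSpace.exp P * (J₀ * NormedSpace.exp P)) y := rfl
          _ = J₀ y := by rw [hkey]
      have happ : (J₀ * NormedSpace.exp P) y = J₀ (NormedSpace.exp P y) := rfl
      rw [hA, happ]
      calc g₀ (-(NormedSpace.exp P x)) (J₀ (NormedSpace.exp P y))
          = -(g₀ (NormedSpace.exp P x) (J₀ (NormedSpace.exp P y))) := by simp
        _ = -(g₀ x (NormedSpace.exp P (J₀ (NormedSpace.exp P y)))) := by
            rw [hexp_sym P hPsym x (J₀ (NormedSpace.exp P y))]
        _ = -(g₀ x (J₀ y)) := by rw [hB]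
        _ = g₀ (J₀ x) y := (hgJ x y).symm
    · intro x hx
      have happ : (J₀ * NormedSpace.exp P) x = J₀ (NormedSpace.exp P x) := rfl
      rw [happ, hcomp]
      set H : V →L[ℝ] V := (2⁻¹ : ℝ) • P with hHdef
      have hHsym : ∀ a b, g₀ (H a) b = g₀ a (H b) := by
        intro a b
        have h1 : H a = (2⁻¹ : ℝ) • P a := rfl
        have h2 : H b = (2⁻¹ : ℝ) • P b := rfl
        rw [h1, h2, map_smul, LinearMap.smul_apply, map_smul, smul_eq_mul, smul_eq_mul,
          hPsym a b]
      have hHP : H + H = P := by rw [hHdef, ← add_smul]; norm_num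
      have hexpH : NormedSpace.exp P = NormedSpace.exp H * NormedSpace.exp H := by
        rw [← NormedSpace.exp_add_of_commute (Commute.refl H), hHP]
      have hHx : NormedSpace.exp H x ≠ 0 := by
        intro h0
        apply hx
        have h2 : x = (NormedSpace.exp (-H) * NormedSpace.exp H) x := by
          rw [(hexp_neg H).1]; rfl
        rw [h2]
        show NormedSpace.exp (-H) (NormedSpace.exp H x) = 0
        rw [h0, map_zero]
      have heq : g₀ x (NormedSpace.exp P x) =
          g₀ (NormedSpace.exp H x) (NormedSpace.exp H x) := by
        rw [hexpH]
        have h3 : (NormedSpace.exp H * NormedSpace.exp H) x =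
            NormedSpace.exp H (NormedSpace.exp H x) := rfl
        rw [h3]
        exact (hexp_sym H hHsym x (NormedSpace.exp H x)).symm
      rw [heq]
      exact hg₀pos _ hHx
  · -- backward direction
    intro J hJ2 hJcomp hJpos
    obtain ⟨hinj, hex⟩ := log_g0 g₀ hg₀sym hg₀pos
    set S : V →L[ℝ] V := -(J₀ * J) with hSdef
    have hSapp : ∀ x, S x = -(J₀ (J x)) := fun x => rfl
    have hJJ : ∀ x, J (J x) = -x := by
      intro x
      have h : (J * J) x = (-1 : V →L[ℝ] V) x := by rw [hJ2]
      simpa using h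
    have f1 : ∀ a b, g₀ (S a) b = g₀ (J₀ a) (J b) := by
      intro a b
      have h := hJcomp a (J b)
      rw [hJJ b] at h
      have h2 : g₀ (J₀ (J a)) (-b) = -(g₀ (J₀ (J a)) b) := by simp
      rw [h2] at h
      calc g₀ (S a) b = g₀ (-(J₀ (J a))) b := by rw [hSapp]
        _ = -(g₀ (J₀ (J a)) b) := by simp
        _ = g₀ (J₀ a) (J b) := h
    have f2 : ∀ a b, g₀ (S a) b = g₀ (J a) (J₀ b) := by
      intro a b
      have h := hgJ (J a) b
      calc g₀ (S a) b = g₀ (-(J₀ (J a))) b := by rw [hSapp]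
        _ = -(g₀ (J₀ (J a)) b) := by simp
        _ = g₀ (J a) (J₀ b) := by rw [h, neg_neg]
    have hSsym : ∀ x y, g₀ (S x) y = g₀ x (S y) := by
      intro x y
      rw [f1 x y, hg₀sym x (S y), f2 y x, hg₀sym (J y) (J₀ x)]
    have hSpos : ∀ x, x ≠ 0 → 0 < g₀ (S x) x := by
      intro x hx
      rw [f1 x x]
      exact hJpos x hx
    obtain ⟨P, hPsym, hPexp⟩ := hex S hSsym hSpos
    have hJS : J = J₀ * S := by
      rw [hSdef, mul_neg, ← mul_assoc, hJ₀, neg_one_mul, neg_neg]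
    have hJeq : J = J₀ * NormedSpace.exp P := by rw [hPexp]; exact hJS
    have hSinv2 : S * NormedSpace.exp (-P) = 1 := by
      rw [← hPexp]; exact (hexp_neg P).2
    have hJSJS : (J₀ * S) * (J₀ * S) = -1 := by rw [← hJS]; exact hJ2
    have hleft : -(J₀ * S * J₀) * S = 1 := by
      calc -(J₀ * S * J₀) * S = -((J₀ * S) * (J₀ * S)) := by
            rw [neg_mul, mul_assoc (J₀ * S) J₀ S]
        _ = 1 := by rw [hJSJS, neg_neg]
    have hQeq : -(J₀ * S * J₀) = NormedSpace.exp (-P) := by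
      calc -(J₀ * S * J₀)
          = -(J₀ * S * J₀) * (S * NormedSpace.exp (-P)) := by rw [hSinv2, mul_one]
        _ = (-(J₀ * S * J₀) * S) * NormedSpace.exp (-P) := by rw [← mul_assoc]
        _ = NormedSpace.exp (-P) := by rw [hleft, one_mul]
    have hQconj : NormedSpace.exp (-(J₀ * P * J₀)) =
        -(J₀ * NormedSpace.exp P * J₀) := by
      have h1 : -(J₀ * P * J₀) = (u : V →L[ℝ] V) * P * ((u⁻¹ : (V →L[ℝ] V)ˣ) : V →L[ℝ] V) := by
        rw [hcu, hcu2, mul_neg]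
      rw [h1, NormedSpace.exp_units_conj u P, hcu, hcu2, mul_neg]
    have hQsym : ∀ x y, g₀ ((-(J₀ * P * J₀)) x) y = g₀ x ((-(J₀ * P * J₀)) y) := by
      intro x y
      have happ : ∀ z, (-(J₀ * P * J₀)) z = -(J₀ (P (J₀ z))) := fun z => rfl
      rw [happ, happ]
      have s1 : g₀ (-(J₀ (P (J₀ x)))) y = -(g₀ (J₀ (P (J₀ x))) y) := by simp
      have s2 : -(g₀ (J₀ (P (J₀ x))) y) = g₀ (P (J₀ x)) (J₀ y) := by
        rw [hgJ (P (J₀ x)) y, neg_neg]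
      have s3 : g₀ (P (J₀ x)) (J₀ y) = g₀ (J₀ x) (P (J₀ y)) := hPsym (J₀ x) (J₀ y)
      have s4 : g₀ (J₀ x) (P (J₀ y)) = -(g₀ x (J₀ (P (J₀ y)))) := hgJ x (P (J₀ y))
      have s5 : -(g₀ x (J₀ (P (J₀ y)))) = g₀ x (-(J₀ (P (J₀ y)))) := by simp
      rw [s1, s2, s3, s4, s5]
    have hnegPsym : ∀ x y, g₀ ((-P) x) y = g₀ x ((-P) y) := by
      intro x y
      have h1 : (-P) x = -(P x) := rfl
      have h2 : (-P) y = -(P y) := rfl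
      rw [h1, h2]
      simp [hPsym x y]
    have hQP : -(J₀ * P * J₀) = -P := by
      apply hinj _ _ hQsym hnegPsym
      rw [hQconj, hPexp, hQeq]
    have hJPJ : J₀ * P * J₀ = P := by
      have := congrArg Neg.neg hQP
      simpa using this
    have hanti : P * J₀ = -(J₀ * P) := by
      have h1 : (J₀ * P * J₀) * J₀ = P * J₀ := by rw [hJPJ]
      have h2 : (J₀ * P * J₀) * J₀ = -(J₀ * P) := by
        rw [mul_assoc (J₀ * P) J₀ J₀, hJ₀, mul_neg, mul_one]
      rw [← h1, h2]
    refine ⟨P, ⟨hPsym, hanti, hJeq⟩, ?_⟩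
    intro Q hQ
    obtain ⟨hQsym', _, hQJ⟩ := hQ
    apply hinj Q P hQsym' hPsym
    have hexpQ : NormedSpace.exp Q = S := by
      rw [hSdef, hQJ, ← mul_assoc, hJ₀, neg_one_mul, neg_neg]
    rw [hexpQ, hPexp]
end

section
/- Let J₀ be an almost complex structure on V and P : V → V a linear endomorphism with P J₀ = −J₀ P such that 1 − P is invertible, and set J := J₀ (1 + P)(1 − P)⁻¹. Then on the complexification V_ℂ the i-eigenspace of J_ℂ is the image under (1 − P)_ℂ of the i-eigenspace of (J₀)_ℂ, and likewise the (−i)-eigenspace of J_ℂ is the image under (1 − P)_ℂ of the (−i)-eigenspace of (J₀)_ℂ; in particular, if (J₀)_ℂ v = i v for v ∈ V_ℂ, then J_ℂ ((1 − P)_ℂ v) = i (1 − P)_ℂ v. (Proposition 3.5.) -/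
open TensorProduct

/-!
STATEMENT 6 (Proposition 3.5).

Let `J₀` be an almost complex structure on the finite-dimensional real vector
space `V` and `P` an endomorphism anticommuting with `J₀` such that `1 - P` is
invertible; set `J := J₀ (1 + P)(1 - P)⁻¹`.  On the complexification
`ℂ ⊗[ℝ] V`, the `i`-eigenspace of `J` is the image under `1 - P` of the
`i`-eigenspace of `J₀`, likewise for the `(-i)`-eigenspaces; in particular if
`J₀ v = i v` then `J ((1 - P) v) = i (1 - P) v`.
-/

theorem space_of_associated_metrics.stmt_6
    {V : Type*} [AddCommGroup V] [Module ℝ V] [FiniteDimensional ℝ V]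
    (J₀ P : Module.End ℝ V)
    (hJ₀ : J₀ * J₀ = -1)
    (hanti : P * J₀ = -(J₀ * P))
    (hP : IsUnit (1 - P)) :
    (Module.End.eigenspace
        (LinearMap.baseChange ℂ (J₀ * (1 + P) * Ring.inverse (1 - P))) Complex.I
      = Submodule.map (LinearMap.baseChange ℂ (1 - P))
          (Module.End.eigenspace (LinearMap.baseChange ℂ J₀) Complex.I)) ∧
    (Module.End.eigenspace
        (LinearMap.baseChange ℂ (J₀ * (1 + P) * Ring.inverse (1 - P))) (-Complex.I)
      = Submodule.map (LinearMap.baseChange ℂ (1 - P))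
          (Module.End.eigenspace (LinearMap.baseChange ℂ J₀) (-Complex.I))) ∧
    (∀ v : ℂ ⊗[ℝ] V, LinearMap.baseChange ℂ J₀ v = Complex.I • v →
      LinearMap.baseChange ℂ (J₀ * (1 + P) * Ring.inverse (1 - P))
          (LinearMap.baseChange ℂ (1 - P) v)
        = Complex.I • LinearMap.baseChange ℂ (1 - P) v) := by
  have hR : Ring.inverse (1 - P) * (1 - P) = 1 := Ring.inverse_mul_cancel _ hP
  have hR' : (1 - P) * Ring.inverse (1 - P) = 1 := Ring.mul_inverse_cancel _ hP
  have hswap : J₀ * (1 + P) = (1 - P) * J₀ := by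
    rw [mul_add, mul_one, sub_mul, one_mul, hanti, sub_neg_eq_add]
  set A := LinearMap.baseChange ℂ J₀ with hA
  set B := LinearMap.baseChange ℂ (1 - P) with hB
  set C := LinearMap.baseChange ℂ (Ring.inverse (1 - P)) with hC
  have hJ : LinearMap.baseChange ℂ (J₀ * (1 + P) * Ring.inverse (1 - P)) = B * (A * C) := by
    rw [hswap, mul_assoc, LinearMap.baseChange_mul, LinearMap.baseChange_mul]
  have hBC : B * C = 1 := by
    rw [hB, hC, ← LinearMap.baseChange_mul, hR', LinearMap.baseChange_one]
  have hCB : C * B = 1 := by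
    rw [hB, hC, ← LinearMap.baseChange_mul, hR, LinearMap.baseChange_one]
  have key : ∀ μ : ℂ, Module.End.eigenspace (B * (A * C)) μ
      = Submodule.map B (Module.End.eigenspace A μ) := by
    intro μ
    ext x
    simp only [Module.End.mem_eigenspace_iff, Submodule.mem_map]
    constructor
    · intro h
      refine ⟨C x, ?_, ?_⟩
      · have h1 : C (B (A (C x))) = C (μ • x) := by
          rw [show B (A (C x)) = (B * (A * C)) x from rfl, h]
        have h2 : C (B (A (C x))) = A (C x) := by
          rw [show C (B (A (C x))) = (C * B) (A (C x)) from rfl, hCB,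
            Module.End.one_apply]
        rw [← h2, h1, map_smul]
      · rw [show B (C x) = (B * C) x from rfl, hBC, Module.End.one_apply]
    · rintro ⟨v, hv, rfl⟩
      have h1 : C (B v) = v := by
        rw [show C (B v) = (C * B) v from rfl, hCB, Module.End.one_apply]
      show B (A (C (B v))) = μ • B v
      rw [h1, hv, map_smul]
  refine ⟨by rw [hJ]; exact key _, by rw [hJ]; exact key _, ?_⟩
  intro v hv
  have : B v ∈ Module.End.eigenspace (B * (A * C)) Complex.I := by
    rw [key]
    exact ⟨v, Module.End.mem_eigenspace_iff.mpr hv, rfl⟩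
  rw [hJ]
  exact Module.End.mem_eigenspace_iff.mp this
end

section
/- Let J₀ be an almost complex structure on V, g₀ an inner product on V compatible with J₀, and P a linear endomorphism with P J₀ = −J₀ P such that 1 − P and 1 + P are invertible; set J := J₀ (1 + P)(1 − P)⁻¹. For a linear endomorphism A of V, define the bilinear form h_A(X, Y) := 2 g₀(X, (1 − P)⁻¹ A (1 − P)⁻¹ Y). Then for every A one has h_{A∘J₀}(X, Y) = h_A(X, J Y) for all X, Y ∈ V; that is, the differential of the Cayley parametrization Ψ_{AM} intertwines the complex structure A ↦ A∘J₀ on the parameter space with the complex structure h ↦ h(·, J·) on the tangent space to the space of associated metrics. (Core identity of Theorem 3.1: the space of associated metrics is a complex manifold in the Cayley parametrization.) -/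
/-!
STATEMENT 7 (core identity of Theorem 3.1).

Let `J₀` be an almost complex structure on `V`, `g₀` a compatible inner
product, and `P` an endomorphism anticommuting with `J₀` with `1 - P` and
`1 + P` invertible; set `J := J₀ (1 + P)(1 - P)⁻¹`.  For an endomorphism `A`
put `h_A (X, Y) := 2 g₀ (X, (1 - P)⁻¹ A (1 - P)⁻¹ Y)`.  Then for every `A`,
`h_{A ∘ J₀} (X, Y) = h_A (X, J Y)` for all `X, Y`.
-/

theorem space_of_associated_metrics.stmt_7
    {V : Type*} [AddCommGroup V] [Module ℝ V] [FiniteDimensional ℝ V]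
    (g₀ : V →ₗ[ℝ] V →ₗ[ℝ] ℝ)
    (hg₀sym : ∀ x y, g₀ x y = g₀ y x)
    (hg₀pos : ∀ x, x ≠ 0 → 0 < g₀ x x)
    (J₀ P : Module.End ℝ V)
    (hJ₀ : J₀ * J₀ = -1)
    (hcomp : ∀ x y, g₀ (J₀ x) (J₀ y) = g₀ x y)
    (hanti : P * J₀ = -(J₀ * P))
    (h₁ : IsUnit (1 - P)) (h₂ : IsUnit (1 + P)) :
    ∀ A : Module.End ℝ V, ∀ x y : V,
      2 * g₀ x ((Ring.inverse (1 - P) * (A * J₀) * Ring.inverse (1 - P)) y)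
        = 2 * g₀ x ((Ring.inverse (1 - P) * A * Ring.inverse (1 - P))
            ((J₀ * (1 + P) * Ring.inverse (1 - P)) y)) := by
  intro A x y
  have hQ : (1 - P) * Ring.inverse (1 - P) = 1 := Ring.mul_inverse_cancel _ h₁
  have hQ' : Ring.inverse (1 - P) * (1 - P) = 1 := Ring.inverse_mul_cancel _ h₁
  have hswap : (1 - P) * J₀ = J₀ * (1 + P) := by
    have : (1 - P) * J₀ = J₀ - P * J₀ := by noncomm_ring
    rw [this, hanti]; noncomm_ring
  have hJeq : J₀ = Ring.inverse (1 - P) * (J₀ * (1 + P)) := by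
    rw [← hswap, ← mul_assoc, hQ', one_mul]
  have key : J₀ * Ring.inverse (1 - P)
      = Ring.inverse (1 - P) * (J₀ * (1 + P) * Ring.inverse (1 - P)) := by
    conv_lhs => rw [hJeq]
    rw [mul_assoc, mul_assoc]
  have : Ring.inverse (1 - P) * (A * J₀) * Ring.inverse (1 - P)
      = (Ring.inverse (1 - P) * A * Ring.inverse (1 - P))
          * (J₀ * (1 + P) * Ring.inverse (1 - P)) := by
    calc Ring.inverse (1 - P) * (A * J₀) * Ring.inverse (1 - P)
        = Ring.inverse (1 - P) * A * (J₀ * Ring.inverse (1 - P)) := by noncomm_ring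
      _ = _ := by rw [key]; noncomm_ring
  rw [show (Ring.inverse (1 - P) * (A * J₀) * Ring.inverse (1 - P)) y
      = ((Ring.inverse (1 - P) * A * Ring.inverse (1 - P))
          * (J₀ * (1 + P) * Ring.inverse (1 - P))) y from by rw [this]]
  rfl
end

section
/- Let g′ be an inner product on V and ω a nondegenerate skew-symmetric bilinear form on V, and let A be the unique linear endomorphism with ω(X, Y) = g′(AX, Y) for all X, Y. Then A is g′-skew-adjoint, −A² is g′-selfadjoint and g′-positive-definite, and with H := (−A²)^{1/2} (the g′-positive-definite selfadjoint square root) the endomorphism J := A H⁻¹ is an almost complex structure (J² = −1) which commutes with H, the bilinear form g(X, Y) := ω(X, JY) equals g′(X, HY) and is an inner product on V, and moreover g(JX, JY) = g(X, Y), ω(JX, JY) = ω(X, Y), and ω(X, JX) > 0 for every X ≠ 0. (The pointwise construction of the canonical projection p_ω of the space of Riemannian metrics onto the space of associated metrics, Section 4, formula (4.1).) -/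
/-!
STATEMENT 8 (pointwise construction of the projection `p_ω`, formula (4.1)).

Let `g'` be an inner product and `ω` a nondegenerate skew-symmetric bilinear
form on the finite-dimensional real vector space `V`, and `A` the (unique)
endomorphism with `ω (X, Y) = g' (A X, Y)`.  Then `A` is `g'`-skew-adjoint,
`-A²` is `g'`-selfadjoint and `g'`-positive-definite, and for (the)
`g'`-positive-definite square root `H` of `-A²`, the endomorphism
`J := A H⁻¹` satisfies `J² = -1`, `J H = H J`, the form
`g (X, Y) := ω (X, J Y)` equals `g' (X, H Y)`, is an inner product, and
`g (J X, J Y) = g (X, Y)`, `ω (J X, J Y) = ω (X, Y)`, `ω (X, J X) > 0` for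
`X ≠ 0`.
-/

theorem space_of_associated_metrics.stmt_8
    {V : Type*} [AddCommGroup V] [Module ℝ V] [FiniteDimensional ℝ V]
    (g' : V →ₗ[ℝ] V →ₗ[ℝ] ℝ)
    (hg'sym : ∀ x y, g' x y = g' y x)
    (hg'pos : ∀ x, x ≠ 0 → 0 < g' x x)
    (ω : V →ₗ[ℝ] V →ₗ[ℝ] ℝ)
    (hωskew : ∀ x y, ω x y = -(ω y x))
    (hωnd : ∀ x, (∀ y, ω x y = 0) → x = 0)
    (A : Module.End ℝ V)
    (hA : ∀ x y, ω x y = g' (A x) y) :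
    (∀ x y, g' (A x) y = -(g' x (A y))) ∧
    (∀ x y, g' ((-(A * A)) x) y = g' x ((-(A * A)) y)) ∧
    (∀ x, x ≠ 0 → 0 < g' ((-(A * A)) x) x) ∧
    (∀ H : Module.End ℝ V,
      (∀ x y, g' (H x) y = g' x (H y)) →
      (∀ x, x ≠ 0 → 0 < g' (H x) x) →
      H * H = -(A * A) →
      ∀ J : Module.End ℝ V, J = A * Ring.inverse H →
        J * J = -1 ∧
        J * H = H * J ∧
        (∀ x y, ω x (J y) = g' x (H y)) ∧
        (∀ x y, ω x (J y) = ω y (J x)) ∧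
        (∀ x, x ≠ 0 → 0 < ω x (J x)) ∧
        (∀ x y, ω (J x) (J (J y)) = ω x (J y)) ∧
        (∀ x y, ω (J x) (J y) = ω x y)) := by
  have hskew : ∀ x y, g' (A x) y = -(g' x (A y)) := by
    intro x y
    rw [← hA, hωskew, hA, hg'sym]
  have hAinj : ∀ x, A x = 0 → x = 0 := by
    intro x hx
    exact hωnd x fun y => by rw [hA, hx, map_zero, LinearMap.zero_apply]
  refine ⟨hskew, ?_, ?_, ?_⟩
  · intro x y
    simp only [LinearMap.neg_apply, Module.End.mul_apply, map_neg, LinearMap.neg_apply]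
    rw [hskew, hskew x (A y)]
    ring
  · intro x hx
    simp only [LinearMap.neg_apply, Module.End.mul_apply, map_neg, LinearMap.neg_apply]
    rw [hskew]
    have : A x ≠ 0 := fun h => hx (hAinj x h)
    have := hg'pos (A x) this
    linarith
  intro H hHsym hHpos hHsq J hJ
  -- `H` is injective, hence a unit
  have hHinj : ∀ x, H x = 0 → x = 0 := by
    intro x hx
    by_contra h
    have := hHpos x h
    rw [hx, map_zero, LinearMap.zero_apply] at this
    exact lt_irrefl 0 this
  have hHunit : IsUnit H := by
    rw [LinearMap.isUnit_iff_ker_eq_bot]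
    exact LinearMap.ker_eq_bot'.mpr fun x hx => hHinj x hx
  set K := Ring.inverse H with hK
  have hHK : H * K = 1 := Ring.mul_inverse_cancel H hHunit
  have hKH : K * H = 1 := Ring.inverse_mul_cancel H hHunit
  -- the key commutation `A * H = H * A`, via the spectral theorem for `H`
  have hcomm : A * H = H * A := by
    letI c : InnerProductSpace.Core ℝ V :=
      { inner := fun x y => g' x y
        conj_inner_symm := fun x y => by simpa using hg'sym y x
        re_inner_nonneg := fun x => by
          by_cases hx : x = 0
          · simp [hx]
          · simpa using (hg'pos x hx).le
        add_left := fun x y z => by simp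
        smul_left := fun x y r => by simp
        definite := fun x hx => by
          by_contra h
          exact absurd hx (ne_of_gt (hg'pos x h)) }
    letI : NormedAddCommGroup V := c.toNormedAddCommGroup
    letI : InnerProductSpace ℝ V := InnerProductSpace.ofCore c.toCore
    have hsym : H.IsSymmetric := fun x y => hHsym x y
    have htop : (⨆ μ, Module.End.eigenspace H μ) = ⊤ := by
      have h0 := hsym.orthogonalComplement_iSup_eigenspaces_eq_bot
      rwa [Submodule.orthogonal_eq_bot_iff] at h0
    refine LinearMap.ext fun x => ?_
    have hx : x ∈ ⨆ μ, Module.End.eigenspace H μ := htop ▸ Submodule.mem_top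
    simp only [Module.End.mul_apply]
    refine Submodule.iSup_induction (motive := fun z => A (H z) = H (A z))
      (Module.End.eigenspace H) hx ?_ (by simp) ?_
    · intro μ x hx
      rw [Module.End.mem_eigenspace_iff] at hx
      by_cases hx0 : x = 0
      · simp [hx0]
      -- the eigenvalue is positive
      have hμ : 0 < μ := by
        have h1 := hHpos x hx0
        rw [hx, map_smul, LinearMap.smul_apply, smul_eq_mul] at h1
        have h2 := hg'pos x hx0
        by_contra h
        push_neg at h
        nlinarith
      -- `A x` is again an eigenvector of `H` with eigenvalue `μ`
      set y := A x with hy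
      have hHHA : H (H y) = (μ * μ) • y := by
        have hc : (H * H) * A = A * (H * H) := by
          rw [hHsq]; noncomm_ring
        have : H (H (A x)) = A (H (H x)) := by
          have := congrArg (fun T : Module.End ℝ V => T x) hc
          simpa [Module.End.mul_apply] using this
        rw [hy, this, hx, map_smul, hx, map_smul, map_smul, smul_smul]
      have hz : H y = μ • y := by
        set z := H y - μ • y with hzdef
        have hHz : H z = -(μ • z) := by
          rw [hzdef, map_sub, map_smul, hHHA, smul_sub, smul_smul]
          abel
        by_contra h
        have hz0 : z ≠ 0 := fun h0 => h (by rwa [hzdef, sub_eq_zero] at h0)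
        have h1 := hHpos z hz0
        rw [hHz] at h1
        have h2 := hg'pos z hz0
        simp only [map_neg, map_smul, LinearMap.neg_apply, LinearMap.smul_apply,
          smul_eq_mul] at h1
        nlinarith
      rw [hx, map_smul, hz, hy]
    · intro a b ha hb
      simp only [map_add, ha, hb]
  have hKA : K * A = A * K := by
    calc K * A = K * A * (H * K) := by rw [hHK, mul_one]
      _ = K * (A * H) * K := by noncomm_ring
      _ = K * (H * A) * K := by rw [hcomm]
      _ = (K * H) * (A * K) := by noncomm_ring
      _ = A * K := by rw [hKH, one_mul]
  have hAA : A * A = -(H * H) := by rw [hHsq, neg_neg]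
  have hJJ : J * J = -1 := by
    calc J * J = A * (K * A) * K := by rw [hJ]; noncomm_ring
      _ = (A * A) * (K * K) := by rw [hKA]; noncomm_ring
      _ = -((H * (H * K)) * K) := by rw [hAA]; noncomm_ring
      _ = -1 := by rw [hHK, mul_one, hHK]
  have hJH : J * H = H * J := by
    calc J * H = A * (K * H) := by rw [hJ, mul_assoc]
      _ = A := by rw [hKH, mul_one]
      _ = A * (H * K) := by rw [hHK, mul_one]
      _ = H * J := by rw [hJ, ← mul_assoc, hcomm, mul_assoc]
  have hAJ : A * J = -H := by
    calc A * J = (A * A) * K := by rw [hJ, mul_assoc]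
      _ = -(H * (H * K)) := by rw [hAA]; noncomm_ring
      _ = -H := by rw [hHK, mul_one]
  have hωJ : ∀ x y, ω x (J y) = g' x (H y) := by
    intro x y
    have h1 : A (J y) = -(H y) := by
      have := congrArg (fun T : Module.End ℝ V => T y) hAJ
      simpa [Module.End.mul_apply] using this
    rw [hA, hskew, h1, map_neg, neg_neg]
  have hωJsym : ∀ x y, ω x (J y) = ω y (J x) := by
    intro x y
    rw [hωJ, hωJ, hg'sym, hHsym]
  refine ⟨hJJ, hJH, hωJ, hωJsym, ?_, ?_, ?_⟩
  · intro x hx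
    rw [hωJ, hg'sym]
    exact hHpos x hx
  · intro x y
    have hJJy : J (J y) = -y := by
      have := congrArg (fun T : Module.End ℝ V => T y) hJJ
      simpa [Module.End.mul_apply] using this
    rw [hJJy, map_neg, hωskew (J x) y, neg_neg]
    · exact hωJsym y x
  · intro x y
    have hHKx : H (K x) = x := by
      have := congrArg (fun T : Module.End ℝ V => T x) hHK
      simpa [Module.End.mul_apply] using this
    have hAHy : A (H y) = H (A y) := by
      have := congrArg (fun T : Module.End ℝ V => T y) hcomm
      simpa [Module.End.mul_apply] using this
    have hJx : J x = A (K x) := by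
      rw [hJ]; rfl
    rw [hωJ, hJx, hskew, hAHy, ← hHsym, hHKx, ← hskew, ← hA]
end

section
/- Let J be an almost complex structure on V, g an inner product with g(JX, JY) = g(X, Y), and ω(X, Y) := g(JX, Y). Let g′ be any inner product on V which is J-Hermitian, i.e. g′(JX, JY) = g′(X, Y), and let A be the unique endomorphism with ω(X, Y) = g′(AX, Y). Then −A² is g′-positive-definite and A ∘ ((−A²)^{1/2})⁻¹ = J, where (−A²)^{1/2} is the g′-positive-definite square root of −A²; that is, the polar-decomposition construction applied to any J-Hermitian metric g′ recovers the same almost complex structure J. (Pointwise form of Lemma 4.1: the fiber of the projection p_ω over an associated metric g consists exactly of the J-Hermitian metrics.) -/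
/-!
`J` is skew for both `g` and `g'`, so the endomorphism `P := -J A` satisfies `g' (P X, Y) = g (X, Y)`.
Hence `P` is `g'`-positive definite and commutes with `J`, and `A = J P` gives `-A² = P²`.
A `g'`-positive definite square root is unique: if `H² = P²` then `S := H - P` is self-adjoint and
anticommutes with the positive definite `H + P`, which forces every eigenvalue of `S` to vanish.
Therefore `H = P` and `A H⁻¹ = J`.
-/

open RCLike in
theorem LinearMap.IsSymmetric.eq_zero_of_mul_add_mul_eq_zero {𝕜 E : Type*} [RCLike 𝕜]
    [NormedAddCommGroup E] [InnerProductSpace 𝕜 E] [FiniteDimensional 𝕜 E] {S T : E →ₗ[𝕜] E}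
    (hS : S.IsSymmetric) (hT : ∀ x, x ≠ 0 → 0 < re (inner 𝕜 (T x) x))
    (hST : S * T + T * S = 0) : S = 0 := by
  let b := hS.eigenvectorBasis rfl
  have hb : ∀ i, S (b i) = (hS.eigenvalues rfl i : 𝕜) • b i := hS.apply_eigenvectorBasis rfl
  have heig : ∀ i, hS.eigenvalues rfl i = 0 := fun i => by
    set μ := hS.eigenvalues rfl i
    have h : (2 * μ : 𝕜) * inner 𝕜 (T (b i)) (b i) = 0 := by
      calc (2 * μ : 𝕜) * inner 𝕜 (T (b i)) (b i)
          = inner 𝕜 (T (b i)) (S (b i)) + inner 𝕜 (T (S (b i))) (b i) := by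
            rw [hb, inner_smul_right, map_smul, inner_smul_left, conj_ofReal]; ring
        _ = inner 𝕜 ((S * T + T * S) (b i)) (b i) := by
            rw [← hS]; simp only [add_apply, Module.End.mul_apply, inner_add_left]
        _ = 0 := by simp [hST]
    have hre := congrArg re h
    rw [← ofReal_ofNat, ← ofReal_mul, re_ofReal_mul, map_zero] at hre
    have := hT _ (b.toBasis.ne_zero i)
    simp only [OrthonormalBasis.coe_toBasis] at this
    nlinarith
  exact b.toBasis.ext fun i => by simp [hb, heig]

theorem LinearMap.IsSymmetric.eq_of_mul_self_eq {𝕜 E : Type*} [RCLike 𝕜]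
    [NormedAddCommGroup E] [InnerProductSpace 𝕜 E] [FiniteDimensional 𝕜 E] {H P : E →ₗ[𝕜] E}
    (hH : H.IsSymmetric) (hHpos : ∀ x, x ≠ 0 → 0 < RCLike.re (inner 𝕜 (H x) x))
    (hP : P.IsSymmetric) (hPpos : ∀ x, x ≠ 0 → 0 < RCLike.re (inner 𝕜 (P x) x))
    (hsq : H * H = P * P) : H = P := by
  have hanti : (H - P) * (H + P) + (H + P) * (H - P) = 0 := by
    have : (H - P) * (H + P) + (H + P) * (H - P) = 2 * (H * H - P * P) := by noncomm_ring
    rw [this, hsq, sub_self, mul_zero]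
  refine sub_eq_zero.mp ((hH.sub hP).eq_zero_of_mul_add_mul_eq_zero (fun x hx => ?_) hanti)
  simpa [inner_add_left] using add_pos (hHpos x hx) (hPpos x hx)

theorem apply_left_eq_neg_apply_right {R M : Type*} [CommRing R] [AddCommGroup M] [Module R M]
    {B : M →ₗ[R] M →ₗ[R] R} {J : Module.End R M} (hJ : J * J = -1)
    (hBJ : ∀ x y, B (J x) (J y) = B x y) (x y : M) : B (J x) y = -B x (J y) := by
  have hJJ : J (J x) = -x := by simpa using LinearMap.congr_fun hJ x
  rw [← hBJ (J x) y, hJJ, map_neg, LinearMap.neg_apply]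

section PosDefForm

variable {V : Type*} [AddCommGroup V] [Module ℝ V] {B : V →ₗ[ℝ] V →ₗ[ℝ] ℝ}

theorem eq_of_forall_apply_eq (hB : ∀ x, x ≠ 0 → 0 < B x x) {u v : V}
    (h : ∀ y, B u y = B v y) : u = v := by
  by_contra huv
  have := hB (u - v) (sub_ne_zero.mpr huv)
  simp [h] at this

theorem injective_of_forall_pos_apply {P : Module.End ℝ V}
    (hP : ∀ x, x ≠ 0 → 0 < B (P x) x) : Function.Injective P := by
  refine (injective_iff_map_eq_zero P).mpr fun x hx => ?_
  by_contra hx0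
  simpa [hx] using hP x hx0

theorem isUnit_of_forall_pos_apply [FiniteDimensional ℝ V] {P : Module.End ℝ V}
    (hP : ∀ x, x ≠ 0 → 0 < B (P x) x) : IsUnit P := by
  have hinj := injective_of_forall_pos_apply hP
  exact (Module.End.isUnit_iff P).mpr ⟨hinj, LinearMap.injective_iff_surjective.mp hinj⟩

theorem pos_apply_mul_self {P : Module.End ℝ V} (hPsa : B.IsSelfAdjoint P)
    (hP : ∀ x, x ≠ 0 → 0 < B (P x) x) (hB : ∀ x, x ≠ 0 → 0 < B x x) :
    ∀ x, x ≠ 0 → 0 < B ((P * P) x) x := fun x hx => by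
  rw [Module.End.mul_apply, hPsa]
  exact hB _ fun h => hx (injective_of_forall_pos_apply hP (h.trans (map_zero P).symm))

theorem commute_of_forall_apply_eq {g : V →ₗ[ℝ] V →ₗ[ℝ] ℝ} {J P : Module.End ℝ V}
    (hg : ∀ x y, g (J x) y = -g x (J y)) (hB : ∀ x y, B (J x) y = -B x (J y))
    (hBpos : ∀ x, x ≠ 0 → 0 < B x x) (hP : ∀ x y, B (P x) y = g x y) :
    Commute J P := by
  ext x
  exact eq_of_forall_apply_eq hBpos fun y => by simp only [Module.End.mul_apply, hB, hP, hg]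

abbrev InnerProductSpace.Core.ofBilinForm (B : V →ₗ[ℝ] V →ₗ[ℝ] ℝ) (hsym : ∀ x y, B x y = B y x)
    (hpos : ∀ x, x ≠ 0 → 0 < B x x) : InnerProductSpace.Core ℝ V where
  inner x y := B x y
  conj_inner_symm x y := hsym y x
  re_inner_nonneg x := by
    rcases eq_or_ne x 0 with rfl | hx
    · simp
    · exact (hpos x hx).le
  add_left x y z := by simp
  smul_left x y r := by simp
  definite x hx := by
    by_contra h
    exact (hpos x h).ne' hx

theorem eq_of_mul_self_eq_of_isSelfAdjoint [FiniteDimensional ℝ V] (hsym : ∀ x y, B x y = B y x)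
    (hpos : ∀ x, x ≠ 0 → 0 < B x x) {H P : Module.End ℝ V}
    (hH : B.IsSelfAdjoint H) (hHpos : ∀ x, x ≠ 0 → 0 < B (H x) x)
    (hP : B.IsSelfAdjoint P) (hPpos : ∀ x, x ≠ 0 → 0 < B (P x) x)
    (hsq : H * H = P * P) : H = P := by
  let core := InnerProductSpace.Core.ofBilinForm B hsym hpos
  let _ : NormedAddCommGroup V := core.toNormedAddCommGroup
  let _ : InnerProductSpace ℝ V := InnerProductSpace.ofCore core.toCore
  exact LinearMap.IsSymmetric.eq_of_mul_self_eq hH hHpos hP hPpos hsq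

end PosDefForm

theorem space_of_associated_metrics.stmt_9
    {V : Type*} [AddCommGroup V] [Module ℝ V] [FiniteDimensional ℝ V]
    (g : V →ₗ[ℝ] V →ₗ[ℝ] ℝ)
    (hgsym : ∀ x y, g x y = g y x)
    (hgpos : ∀ x, x ≠ 0 → 0 < g x x)
    (J : Module.End ℝ V) (hJ : J * J = -1)
    (hgJ : ∀ x y, g (J x) (J y) = g x y)
    (g' : V →ₗ[ℝ] V →ₗ[ℝ] ℝ)
    (hg'sym : ∀ x y, g' x y = g' y x)
    (hg'pos : ∀ x, x ≠ 0 → 0 < g' x x)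
    (hg'J : ∀ x y, g' (J x) (J y) = g' x y)
    (A : Module.End ℝ V)
    (hA : ∀ x y, g (J x) y = g' (A x) y) :
    ((∀ x y, g' ((-(A * A)) x) y = g' x ((-(A * A)) y)) ∧
     (∀ x, x ≠ 0 → 0 < g' ((-(A * A)) x) x)) ∧
    (∀ H : Module.End ℝ V,
      (∀ x y, g' (H x) y = g' x (H y)) →
      (∀ x, x ≠ 0 → 0 < g' (H x) x) →
      H * H = -(A * A) →
      A * Ring.inverse H = J) := by
  have hJg := apply_left_eq_neg_apply_right hJ hgJ
  have hJg' := apply_left_eq_neg_apply_right hJ hg'J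
  set P := -(J * A)
  have hPg : ∀ x y, g' (P x) y = g x y := fun x y => by
    simp only [P, LinearMap.neg_apply, Module.End.mul_apply, map_neg, hJg', ← hA, hgJ, neg_neg]
  have hPsa : g'.IsSelfAdjoint P := fun x y => by rw [hPg, hgsym, ← hPg, hg'sym]
  have hPpos : ∀ x, x ≠ 0 → 0 < g' (P x) x := fun x hx => hPg x x ▸ hgpos x hx
  have hAP : A = J * P := by simp only [P, mul_neg, ← mul_assoc, hJ, neg_mul, one_mul, neg_neg]
  have hJP : Commute J P := commute_of_forall_apply_eq hJg hJg' hg'pos hPg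
  have hsq : -(A * A) = P * P := by
    rw [hAP, hJP.symm.mul_mul_mul_comm, hJ, neg_one_mul, neg_neg]
  refine ⟨hsq ▸ ⟨hPsa.mul hPsa, pos_apply_mul_self hPsa hPpos hg'pos⟩, fun H hH hHpos hHsq => ?_⟩
  rw [eq_of_mul_self_eq_of_isSelfAdjoint hg'sym hg'pos hH hHpos hPsa hPpos (hHsq.trans hsq), hAP,
    mul_assoc, Ring.mul_inverse_cancel P (isUnit_of_forall_pos_apply hPpos), mul_one]
end

section
/- Let J₀ be an almost complex structure on V compatible with the symplectic form ω and with associated metric g₀ (so ω(X, Y) = g₀(J₀X, Y)). Let P be a linear endomorphism with P J₀ = −J₀ P and 1 ± P invertible, set S := (1 + P)(1 − P)⁻¹ and J := J₀ S, and assume J² = −1. Let g₀′ be any symmetric bilinear form on V which is J₀-Hermitian (g₀′(J₀X, J₀Y) = g₀′(X, Y)), and define g′(X, Y) := ½ (g₀′(SX, Y) + g₀′(X, SY)). Then g′ is a symmetric J-Hermitian bilinear form (g′(JX, JY) = g′(X, Y)), and its fundamental form ω′(X, Y) := g′(JX, Y) satisfies ω′(X, Y) = ½ (ω₀′(X, Y)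 + ω₀′(SX, SY)), where ω₀′(X, Y) := g₀′(J₀X, Y). (Lemma 4.2, formulas (4.2) and (4.3).) -/
/-!
STATEMENT 10 (Lemma 4.2, formulas (4.2) and (4.3)).

Let `J₀` be an almost complex structure compatible with the inner product
`g₀` (with symplectic form `ω (X, Y) = g₀ (J₀ X, Y)`), `P` an endomorphism
anticommuting with `J₀` with `1 ± P` invertible, `S := (1 + P)(1 - P)⁻¹`,
`J := J₀ S` with `J² = -1`.  For any symmetric `J₀`-Hermitian bilinear form
`g₀'`, the form `g' (X, Y) := ½ (g₀' (S X, Y) + g₀' (X, S Y))` is symmetric,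
`J`-Hermitian, and its fundamental form `ω' (X, Y) := g' (J X, Y)` satisfies
`ω' (X, Y) = ½ (ω₀' (X, Y) + ω₀' (S X, S Y))` where
`ω₀' (X, Y) := g₀' (J₀ X, Y)`.
-/

theorem space_of_associated_metrics.stmt_10
    {V : Type*} [AddCommGroup V] [Module ℝ V] [FiniteDimensional ℝ V]
    (g₀ : V →ₗ[ℝ] V →ₗ[ℝ] ℝ)
    (hg₀sym : ∀ x y, g₀ x y = g₀ y x)
    (hg₀pos : ∀ x, x ≠ 0 → 0 < g₀ x x)
    (J₀ : Module.End ℝ V) (hJ₀ : J₀ * J₀ = -1)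
    (hcomp : ∀ x y, g₀ (J₀ x) (J₀ y) = g₀ x y)
    (P : Module.End ℝ V) (hanti : P * J₀ = -(J₀ * P))
    (h₁ : IsUnit (1 - P)) (h₂ : IsUnit (1 + P))
    (S J : Module.End ℝ V)
    (hS : S = (1 + P) * Ring.inverse (1 - P))
    (hJdef : J = J₀ * S) (hJ : J * J = -1)
    (g₀' : V →ₗ[ℝ] V →ₗ[ℝ] ℝ)
    (hg₀'sym : ∀ x y, g₀' x y = g₀' y x)
    (hg₀'herm : ∀ x y, g₀' (J₀ x) (J₀ y) = g₀' x y) :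
    (∀ x y, (g₀' (S x) y + g₀' x (S y)) / 2 = (g₀' (S y) x + g₀' y (S x)) / 2) ∧
    (∀ x y, (g₀' (S (J x)) (J y) + g₀' (J x) (S (J y))) / 2
        = (g₀' (S x) y + g₀' x (S y)) / 2) ∧
    (∀ x y, (g₀' (S (J x)) y + g₀' (J x) (S y)) / 2
        = (g₀' (J₀ x) y + g₀' (J₀ (S x)) (S y)) / 2) := by
  have hi1 : (1 - P) * Ring.inverse (1 - P) = 1 := Ring.mul_inverse_cancel _ h₁
  have hi2 : Ring.inverse (1 - P) * (1 - P) = 1 := Ring.inverse_mul_cancel _ h₁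
  have key : (1 + P) * J₀ = J₀ * (1 - P) := by
    rw [add_mul, one_mul, hanti, mul_sub, mul_one, sub_eq_add_neg]
  have key2 : (1 - P) * J₀ = J₀ * (1 + P) := by
    rw [sub_mul, one_mul, hanti, mul_add, mul_one, sub_neg_eq_add]
  have hSJS : S * J₀ * S = J₀ := by
    rw [hS]
    simp only [mul_assoc]
    rw [← mul_assoc J₀ (1 + P), ← key2, mul_assoc (1 - P) J₀,
      ← mul_assoc (Ring.inverse (1 - P)) (1 - P), hi2, one_mul,
      ← mul_assoc, key, mul_assoc, hi1, mul_one]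
  have hSJ : ∀ x, S (J x) = J₀ x := by
    intro x
    have := DFunLike.congr_fun hSJS x
    simpa [hJdef, Module.End.mul_apply] using this
  have hJapp : ∀ x, J x = J₀ (S x) := by
    intro x; simp [hJdef, Module.End.mul_apply]
  refine ⟨fun x y => by rw [hg₀'sym (S x) y, hg₀'sym x (S y), add_comm],
    fun x y => ?_, fun x y => ?_⟩
  · rw [hSJ x, hSJ y, hJapp x, hJapp y, hg₀'herm, hg₀'herm, add_comm]
  · rw [hSJ x, hJapp x]
end

section
/- Let g be an inner product on V, J an almost complex structure with g(JX, JY) = g(X, Y), and ω(X, Y) := g(JX, Y). Let A be a g-selfadjoint endomorphism with A J = −J A, and let t ∈ ℝ. Then exp(tA) is g-positive-definite, g_t(X, Y) := g(X, exp(tA) Y) is an inner product, J_t := J ∘ exp(tA) is an almost complex structure which is positive associated to ω (ω(J_tX, J_tY) = ω(X, Y) and ω(X, J_tX) > 0 for X ≠ 0), and g_t(X, Y) = ω(X, J_t Y) for all X, Y; i.e. the curve g_t of metrics remains associated to ω, with corresponding almost complex structures J_t. (Pointwise core of Proposition 5.1: the space of associated metrics is totally geodesic in the space of metrics of fixed volume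 form, since the geodesics g e^{tA} stay in it.) -/
/-!
STATEMENT 11 (pointwise core of Proposition 5.1).

Let `g` be an inner product on `V`, `J` a compatible almost complex structure,
`ω (X, Y) := g (J X, Y)`, `A` a `g`-selfadjoint endomorphism anticommuting
with `J`, and `t ∈ ℝ`.  Then `exp (t A)` is `g`-positive-definite,
`g_t (X, Y) := g (X, exp (t A) Y)` is an inner product,
`J_t := J ∘ exp (t A)` is an almost complex structure positive associated to
`ω`, and `g_t (X, Y) = ω (X, J_t Y)`.  (Continuous linear endomorphisms of a
finite-dimensional normed space are used so that the exponential
`NormedSpace.exp ℝ` is available.)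
-/

set_option maxHeartbeats 1600000 in
set_option synthInstance.maxHeartbeats 1000000 in
theorem space_of_associated_metrics.stmt_11
    {V : Type*} [NormedAddCommGroup V] [NormedSpace ℝ V] [FiniteDimensional ℝ V]
    (g : V →ₗ[ℝ] V →ₗ[ℝ] ℝ)
    (hgsym : ∀ x y, g x y = g y x)
    (hgpos : ∀ x, x ≠ 0 → 0 < g x x)
    (J : V →L[ℝ] V) (hJ : J * J = -1)
    (hcomp : ∀ x y, g (J x) (J y) = g x y)
    (A : V →L[ℝ] V)
    (hAsa : ∀ x y, g (A x) y = g x (A y))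
    (hAJ : A * J = -(J * A))
    (t : ℝ) :
    (∀ x y, g (NormedSpace.exp (t • A) x) y = g x (NormedSpace.exp (t • A) y)) ∧
    (∀ x, x ≠ 0 → 0 < g (NormedSpace.exp (t • A) x) x) ∧
    (∀ x y, g x (NormedSpace.exp (t • A) y) = g y (NormedSpace.exp (t • A) x)) ∧
    (∀ x, x ≠ 0 → 0 < g x (NormedSpace.exp (t • A) x)) ∧
    (J * NormedSpace.exp (t • A)) * (J * NormedSpace.exp (t • A)) = -1 ∧
    (∀ x y, g (J ((J * NormedSpace.exp (t • A)) x)) ((J * NormedSpace.exp (t • A)) y)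
        = g (J x) y) ∧
    (∀ x, x ≠ 0 → 0 < g (J x) ((J * NormedSpace.exp (t • A)) x)) ∧
    (∀ x y, g x (NormedSpace.exp (t • A) y)
        = g (J x) ((J * NormedSpace.exp (t • A)) y)) := by
  have hCS : CompleteSpace V := FiniteDimensional.complete ℝ V
  let +nondep : NormedAlgebra ℚ (V →L[ℝ] V) := .restrictScalars ℚ ℝ (V →L[ℝ] V)
  -- selfadjointness of exp (s • A) for every s
  have hpow : ∀ (s : ℝ) (n : ℕ) (x y : V),
      g (((s • A) ^ n) x) y = g x (((s • A) ^ n) y) := by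
    intro s n
    induction n with
    | zero => intro x y; simp
    | succ n ih =>
      intro x y
      have h1 : ((s • A) ^ (n + 1)) x = (s • A) (((s • A) ^ n) x) := by
        rw [pow_succ']; rfl
      have h2 : ((s • A) ^ (n + 1)) y = ((s • A) ^ n) ((s • A) y) := by
        rw [pow_succ]; rfl
      rw [h1, h2]
      have : g ((s • A) (((s • A) ^ n) x)) y
          = g (((s • A) ^ n) x) ((s • A) y) := by
        simp only [ContinuousLinearMap.smul_apply, map_smul, LinearMap.smul_apply]
        rw [hAsa]
      rw [this, ih]
  have hsa : ∀ (s : ℝ) (x y : V),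
      g (NormedSpace.exp (s • A) x) y = g x (NormedSpace.exp (s • A) y) := by
    intro s x y
    let f : (V →L[ℝ] V) →ₗ[ℝ] ℝ :=
      { toFun := fun S => g (S x) y - g x (S y)
        map_add' := by intro S T; simp [ContinuousLinearMap.add_apply]; noncomm_ring
        map_smul' := by intro c S; simp [ContinuousLinearMap.smul_apply]; ring }
    have hfz : ∀ n : ℕ, f (((n.factorial : ℝ))⁻¹ • (s • A) ^ n) = 0 := by
      intro n
      have : f ((s • A) ^ n) = 0 := by
        simp only [f, LinearMap.coe_mk, AddHom.coe_mk, hpow s n x y, sub_self]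
      rw [map_smul, this, smul_zero]
    have hsum : Summable fun n : ℕ => ((n.factorial : ℝ))⁻¹ • (s • A) ^ n :=
      NormedSpace.expSeries_summable' (𝕂 := ℝ) (s • A)
    have hmap : f (NormedSpace.exp (s • A)) = 0 := by
      rw [NormedSpace.exp_eq_tsum (𝕂 := ℝ)]
      have := (LinearMap.toContinuousLinearMap f).map_tsum hsum
      simp only [LinearMap.coe_toContinuousLinearMap'] at this
      rw [this]
      simp [hfz]
    have := hmap
    simp only [f, LinearMap.coe_mk, AddHom.coe_mk, sub_eq_zero] at this
    exact this
  -- exp (s • A) * exp (-(s • A)) = 1 etc.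
  have hinv : ∀ s : ℝ, NormedSpace.exp (-(s • A)) * NormedSpace.exp (s • A) = 1 := by
    intro s
    rw [← NormedSpace.exp_add_of_commute ((Commute.refl (s • A)).neg_left)]
    simp
  -- conjugation: J * exp (s • A) = exp (-(s • A)) * J
  have hu1 : J * (-J) = 1 := by rw [mul_neg, hJ, neg_neg]
  have hu2 : (-J) * J = 1 := by rw [neg_mul, hJ, neg_neg]
  have hconj : ∀ s : ℝ, J * NormedSpace.exp (s • A) = NormedSpace.exp (-(s • A)) * J := by
    intro s
    set u : (V →L[ℝ] V)ˣ := ⟨J, -J, hu1, hu2⟩ with hud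
    have key := NormedSpace.exp_units_conj u (s • A)
    have hJAJ : J * A * J = A := by
      have hJA : J * A = -(A * J) := by rw [hAJ, neg_neg]
      rw [hJA, neg_mul, mul_assoc, hJ, mul_neg, mul_one, neg_neg]
    have harg : (↑u * (s • A) * ↑u⁻¹ : V →L[ℝ] V) = -(s • A) := by
      show J * (s • A) * (-J) = -(s • A)
      rw [mul_neg, mul_smul_comm, smul_mul_assoc, hJAJ]
    rw [harg] at key
    calc J * NormedSpace.exp (s • A)
        = (↑u * NormedSpace.exp (s • A) * ↑u⁻¹) * J := by
          show _ = (J * NormedSpace.exp (s • A) * (-J)) * J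
          rw [mul_assoc (J * NormedSpace.exp (s • A)) (-J) J, hu2, mul_one]
      _ = NormedSpace.exp (-(s • A)) * J := by rw [← key]
  -- exp ((t/2) • A) squared is exp (t • A)
  have hhalf : NormedSpace.exp ((t / 2) • A) * NormedSpace.exp ((t / 2) • A)
      = NormedSpace.exp (t • A) := by
    rw [← NormedSpace.exp_add_of_commute (Commute.refl ((t / 2) • A)), ← add_smul]
    norm_num
  -- exp ((t/2) • A) is injective
  have hHne : ∀ x : V, x ≠ 0 → NormedSpace.exp ((t / 2) • A) x ≠ 0 := by
    intro x hx hcontra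
    have := congrArg (fun S => S x)
      (hinv (t / 2))
    simp only [ContinuousLinearMap.mul_apply, ContinuousLinearMap.one_apply] at this
    rw [hcontra] at this
    simp at this
    exact hx this.symm
  -- positivity of exp (t • A)
  have hEpos : ∀ x, x ≠ 0 → 0 < g (NormedSpace.exp (t • A) x) x := by
    intro x hx
    have h1 : NormedSpace.exp (t • A) x
        = NormedSpace.exp ((t / 2) • A) (NormedSpace.exp ((t / 2) • A) x) := by
      rw [← ContinuousLinearMap.mul_apply, hhalf]
    rw [h1, hsa (t / 2)]
    exact hgpos _ (hHne x hx)
  -- E * J = J * exp (-(t • A))  (pointwise consequences)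
  have hEJ : NormedSpace.exp (t • A) * J = J * NormedSpace.exp ((-t) • A) := by
    have := hconj (-t)
    rw [show -((-t) • A) = t • A by simp [neg_smul]] at this
    rw [← this]
  have hJ2 : (J * NormedSpace.exp (t • A)) * (J * NormedSpace.exp (t • A)) = -1 := by
    calc (J * NormedSpace.exp (t • A)) * (J * NormedSpace.exp (t • A))
        = J * ((NormedSpace.exp (t • A) * J) * NormedSpace.exp (t • A)) := by noncomm_ring
      _ = J * (J * (NormedSpace.exp ((-t) • A) * NormedSpace.exp (t • A))) := by
          rw [hEJ]; noncomm_ring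
      _ = (J * J) * (NormedSpace.exp (-(t • A)) * NormedSpace.exp (t • A)) := by
          rw [show ((-t) • A : V →L[ℝ] V) = -(t • A) by simp [neg_smul]]; noncomm_ring
      _ = -1 := by rw [hJ, hinv t]; simp
  -- E * J * E = J
  have hEJE : NormedSpace.exp (t • A) * J * NormedSpace.exp (t • A) = J := by
    rw [hEJ, mul_assoc, show ((-t) • A : V →L[ℝ] V) = -(t • A) by simp [neg_smul],
      hinv t, mul_one]
  refine ⟨hsa t, hEpos, ?_, ?_, hJ2, ?_, ?_, ?_⟩
  · intro x y
    rw [← hsa t x y, hgsym]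
  · intro x hx
    rw [hgsym]
    exact hEpos x hx
  · intro x y
    have h1 : J ((J * NormedSpace.exp (t • A)) x)
        = -(NormedSpace.exp (t • A) x) := by
      have := congrArg (fun S => S x) (show J * (J * NormedSpace.exp (t • A))
          = -(NormedSpace.exp (t • A)) by rw [← mul_assoc, hJ]; noncomm_ring)
      simpa using this
    have h2 : (J * NormedSpace.exp (t • A)) y = J (NormedSpace.exp (t • A) y) := rfl
    rw [h1, h2]
    have h3 : g (-(NormedSpace.exp (t • A) x)) (J (NormedSpace.exp (t • A) y))
        = -(g (NormedSpace.exp (t • A) x) (J (NormedSpace.exp (t • A) y))) := by simp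
    rw [h3, hsa t]
    have h4 : NormedSpace.exp (t • A) (J (NormedSpace.exp (t • A) y)) = J y := by
      have := congrArg (fun S => S y) hEJE
      simpa using this
    rw [h4]
    have h5 : g (J x) y = -(g x (J y)) := by
      have hJJ : J (J x) = -x := by
        have := congrArg (fun S => S x) hJ
        simpa using this
      have h := hcomp (J x) y
      rw [hJJ, map_neg, LinearMap.neg_apply] at h
      exact h.symm
    rw [h5]
  · intro x hx
    have h2 : (J * NormedSpace.exp (t • A)) x = J (NormedSpace.exp (t • A) x) := rfl
    rw [h2, hcomp, hgsym]
    exact hEpos x hx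
  · intro x y
    have h2 : (J * NormedSpace.exp (t • A)) y = J (NormedSpace.exp (t • A) y) := rfl
    rw [h2, hcomp]
end

section
/- Let g₀ be an inner product on V, J₀ an almost complex structure compatible with g₀, and A a g₀-selfadjoint endomorphism with A J₀ = −J₀ A. Then exp(A) + exp(−A) is invertible, and P := (exp(A) + exp(−A))⁻¹ (exp(A) − exp(−A)) is g₀-selfadjoint, anticommutes with J₀ (P J₀ = −J₀ P), satisfies that 1 − P² is g₀-positive-definite (in particular 1 − P is invertible), and (1 + P)(1 − P)⁻¹ = exp(2A). Consequently the geodesic g₀ e^{2tA} of the space of associated metrics corresponds, in the Cayley parametrization, to the curve P(t) = tanh(tA). (Theorem 5.3, part 5.) -/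
set_option maxHeartbeats 1000000


/-!
STATEMENT 12 (Theorem 5.3, part 5).

Let `g₀` be an inner product on `V`, `J₀` a compatible almost complex
structure, and `A` a `g₀`-selfadjoint endomorphism anticommuting with `J₀`.
Then `exp A + exp (-A)` is invertible, and
`P := (exp A + exp (-A))⁻¹ (exp A - exp (-A)) = tanh A` is `g₀`-selfadjoint,
anticommutes with `J₀`, `1 - P²` is `g₀`-positive-definite (in particular
`1 - P` is invertible), and `(1 + P)(1 - P)⁻¹ = exp (2 A)`.
-/

open NormedSpace Nat ContinuousLinearMap

section Aux

variable {V : Type*} [NormedAddCommGroup V] [NormedSpace ℝ V] [FiniteDimensional ℝ V]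
  (g₀ : V →ₗ[ℝ] V →ₗ[ℝ] ℝ)

/-- Powers of a selfadjoint operator are selfadjoint. -/
lemma aux_pow_sa (S : V →L[ℝ] V) (hS : ∀ x y, g₀ (S x) y = g₀ x (S y)) :
    ∀ (n : ℕ) (x y : V), g₀ ((S ^ n) x) y = g₀ x ((S ^ n) y) := by
  intro n
  induction n with
  | zero => intro x y; simp
  | succ n ih =>
    intro x y
    have hc : S ((S ^ n) y) = (S ^ n) (S y) := by
      have := congrArg (fun f : V →L[ℝ] V => f y) ((Commute.refl S).pow_right n).eq
      simpa [ContinuousLinearMap.mul_apply] using this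
    rw [pow_succ, ContinuousLinearMap.mul_apply, ContinuousLinearMap.mul_apply,
      ih (S x) y, hS x ((S ^ n) y), hc]

/-- The exponential of a selfadjoint operator is selfadjoint. -/
lemma aux_exp_sa (S : V →L[ℝ] V) (hS : ∀ x y, g₀ (S x) y = g₀ x (S y)) :
    ∀ x y, g₀ ((exp S) x) y = g₀ x ((exp S) y) := by
  intro x y
  have hsum : Summable fun n : ℕ => ((n ! : ℝ)⁻¹) • S ^ n := expSeries_summable' S
  let Φ : (V →L[ℝ] V) →L[ℝ] ℝ :=
    (LinearMap.toContinuousLinearMap (g₀.flip y)).comp (ContinuousLinearMap.apply ℝ V x)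
  let Φ' : (V →L[ℝ] V) →L[ℝ] ℝ :=
    (LinearMap.toContinuousLinearMap (g₀ x)).comp (ContinuousLinearMap.apply ℝ V y)
  have hΦ : ∀ T : V →L[ℝ] V, Φ T = g₀ (T x) y := by
    intro T
    simp [Φ, ContinuousLinearMap.comp_apply, ContinuousLinearMap.apply_apply,
      LinearMap.flip_apply]
  have hΦ' : ∀ T : V →L[ℝ] V, Φ' T = g₀ x (T y) := by
    intro T
    simp [Φ', ContinuousLinearMap.comp_apply, ContinuousLinearMap.apply_apply]
  have h1 : g₀ ((exp S) x) y = ∑' n : ℕ, Φ (((n ! : ℝ)⁻¹) • S ^ n) := by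
    rw [← hΦ, exp_eq_tsum ℝ, ContinuousLinearMap.map_tsum Φ hsum]
  have h2 : g₀ x ((exp S) y) = ∑' n : ℕ, Φ' (((n ! : ℝ)⁻¹) • S ^ n) := by
    rw [← hΦ', exp_eq_tsum ℝ, ContinuousLinearMap.map_tsum Φ' hsum]
  rw [h1, h2]
  refine tsum_congr fun n => ?_
  rw [map_smul, map_smul, hΦ, hΦ', aux_pow_sa g₀ S hS n x y]

/-- A two-sided inverse of a selfadjoint operator is selfadjoint. -/
lemma aux_inv_sa (S T : V →L[ℝ] V) (h1 : S * T = 1)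
    (hS : ∀ x y, g₀ (S x) y = g₀ x (S y)) :
    ∀ x y, g₀ (T x) y = g₀ x (T y) := by
  intro x y
  have hy : S (T y) = y := by
    have := congrArg (fun f : V →L[ℝ] V => f y) h1; simpa using this
  have hx : S (T x) = x := by
    have := congrArg (fun f : V →L[ℝ] V => f x) h1; simpa using this
  calc g₀ (T x) y = g₀ (T x) (S (T y)) := by rw [hy]
    _ = g₀ (S (T x)) (T y) := (hS (T x) (T y)).symm
    _ = g₀ x (T y) := by rw [hx]

end Aux

/-- A two-sided inverse commutes with anything the original element commutes with. -/
lemma aux_comm_inv {R : Type*} [Ring R] {a c b : R} (h1 : c * a = 1) (h2 : a * c = 1)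
    (h : Commute a b) : Commute c b := by
  show c * b = b * c
  calc c * b = c * (b * (a * c)) := by rw [h2, mul_one]
    _ = c * (b * a * c) := by rw [mul_assoc b a c]
    _ = c * (a * b * c) := by rw [h.eq]
    _ = c * a * (b * c) := by rw [mul_assoc a b c, ← mul_assoc c a (b * c)]
    _ = b * c := by rw [h1, one_mul]

theorem space_of_associated_metrics.stmt_12
    {V : Type*} [NormedAddCommGroup V] [NormedSpace ℝ V] [FiniteDimensional ℝ V]
    (g₀ : V →ₗ[ℝ] V →ₗ[ℝ] ℝ)
    (hg₀sym : ∀ x y, g₀ x y = g₀ y x)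
    (hg₀pos : ∀ x, x ≠ 0 → 0 < g₀ x x)
    (J₀ : V →L[ℝ] V) (hJ₀ : J₀ * J₀ = -1)
    (hcomp : ∀ x y, g₀ (J₀ x) (J₀ y) = g₀ x y)
    (A : V →L[ℝ] V)
    (hAsa : ∀ x y, g₀ (A x) y = g₀ x (A y))
    (hAJ : A * J₀ = -(J₀ * A)) :
    IsUnit (NormedSpace.exp A + NormedSpace.exp (-A)) ∧
    (∀ P : V →L[ℝ] V,
      P = Ring.inverse (NormedSpace.exp A + NormedSpace.exp (-A)) *
            (NormedSpace.exp A - NormedSpace.exp (-A)) →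
      (∀ x y, g₀ (P x) y = g₀ x (P y)) ∧
      P * J₀ = -(J₀ * P) ∧
      (∀ x, x ≠ 0 → 0 < g₀ ((1 - P * P) x) x) ∧
      IsUnit (1 - P) ∧
      (1 + P) * Ring.inverse (1 - P) = NormedSpace.exp ((2 : ℝ) • A)) := by
  let +nondep : NormedAlgebra ℚ (V →L[ℝ] V) := .restrictScalars ℚ ℝ (V →L[ℝ] V)
  set E := exp A with hE
  set F := exp (-A) with hF
  have hcommA : Commute A (-A) := (Commute.refl A).neg_right
  have hEF : E * F = 1 := by
    rw [hE, hF, ← exp_add_of_commute hcommA]; simp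
  have hFE : F * E = 1 := by
    rw [hE, hF, ← exp_add_of_commute hcommA.symm]; simp
  have hnegAsa : ∀ x y, g₀ ((-A) x) y = g₀ x ((-A) y) := by
    intro x y
    simp only [ContinuousLinearMap.neg_apply, map_neg, LinearMap.neg_apply, hAsa x y]
  have hsaE : ∀ x y, g₀ (E x) y = g₀ x (E y) := aux_exp_sa g₀ A hAsa
  have hsaF : ∀ x y, g₀ (F x) y = g₀ x (F y) := aux_exp_sa g₀ (-A) hnegAsa
  have hcommEF : Commute E F := hcommA.exp
  -- exp of a selfadjoint operator is positive definite
  have hexp_pos : ∀ (S : V →L[ℝ] V), (∀ x y, g₀ (S x) y = g₀ x (S y)) →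
      ∀ x, x ≠ 0 → 0 < g₀ ((exp S) x) x := by
    intro S hS x hx
    have hhalf : ((2 : ℝ)⁻¹ • S) + ((2 : ℝ)⁻¹ • S) = S := by
      rw [← two_smul ℝ ((2 : ℝ)⁻¹ • S), smul_smul]; norm_num
    have hSsplit : exp S = exp ((2 : ℝ)⁻¹ • S) * exp ((2 : ℝ)⁻¹ • S) := by
      conv_lhs => rw [← hhalf]
      exact exp_add_of_commute (Commute.refl _)
    have hSsa' : ∀ x y, g₀ (((2 : ℝ)⁻¹ • S) x) y = g₀ x (((2 : ℝ)⁻¹ • S) y) := by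
      intro x y
      simp only [ContinuousLinearMap.smul_apply, map_smul, LinearMap.smul_apply, hS x y]
    have hHsa : ∀ x y, g₀ ((exp ((2 : ℝ)⁻¹ • S)) x) y = g₀ x ((exp ((2 : ℝ)⁻¹ • S)) y) :=
      aux_exp_sa g₀ _ hSsa'
    have hHinv : exp (-((2 : ℝ)⁻¹ • S)) * exp ((2 : ℝ)⁻¹ • S) = 1 := by
      have hcomm : Commute (-((2 : ℝ)⁻¹ • S)) ((2 : ℝ)⁻¹ • S) := (Commute.refl _).neg_left
      rw [← exp_add_of_commute hcomm]
      simp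
    have hHx : exp ((2 : ℝ)⁻¹ • S) x ≠ 0 := by
      intro h0
      apply hx
      have := congrArg (fun f : V →L[ℝ] V => f x) hHinv
      simpa [ContinuousLinearMap.mul_apply, h0] using this.symm
    have hgE : g₀ ((exp S) x) x
        = g₀ ((exp ((2 : ℝ)⁻¹ • S)) x) ((exp ((2 : ℝ)⁻¹ • S)) x) := by
      rw [hSsplit, ContinuousLinearMap.mul_apply, hHsa]
    rw [hgE]
    exact hg₀pos _ hHx
  -- E + F is positive definite, hence injective, hence a unit
  have hsumpos : ∀ x, x ≠ 0 → 0 < g₀ ((E + F) x) x := by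
    intro x hx
    have h1 := hexp_pos A hAsa x hx
    have h2 := hexp_pos (-A) hnegAsa x hx
    have hsum : g₀ ((E + F) x) x = g₀ (E x) x + g₀ (F x) x := by
      simp [ContinuousLinearMap.add_apply, map_add, LinearMap.add_apply]
    rw [hsum, hE, hF]
    linarith
  have hinj : Function.Injective (E + F) := by
    intro a b hab
    by_contra hne
    have h0 : (E + F) (a - b) = 0 := by rw [map_sub, hab, sub_self]
    have := hsumpos (a - b) (sub_ne_zero.mpr hne)
    rw [h0] at this
    simp at this
  have hsurj : Function.Surjective (E + F) :=
    (LinearMap.injective_iff_surjective (f := (E + F : V →L[ℝ] V).toLinearMap)).mp hinj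
  have hu : IsUnit (E + F) := by
    let e : V ≃L[ℝ] V :=
      (LinearEquiv.ofBijective (E + F : V →L[ℝ] V).toLinearMap
        ⟨hinj, hsurj⟩).toContinuousLinearEquiv
    refine ⟨⟨E + F, (e.symm : V →L[ℝ] V), ?_, ?_⟩, rfl⟩
    · ext v
      show (E + F) ((e.symm : V →L[ℝ] V) v) = v
      exact e.apply_symm_apply v
    · ext v
      show (e.symm : V →L[ℝ] V) ((E + F) v) = v
      exact e.symm_apply_apply v
  refine ⟨hu, ?_⟩
  intro P hP
  set C := Ring.inverse (E + F) with hC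
  have hC1 : C * (E + F) = 1 := Ring.inverse_mul_cancel _ hu
  have hC2 : (E + F) * C = 1 := Ring.mul_inverse_cancel _ hu
  -- commutation facts
  have c1 : Commute (E + F) E := (Commute.refl E).add_left hcommEF.symm
  have c2 : Commute (E + F) F := hcommEF.add_left (Commute.refl F)
  have c3 : Commute (E + F) (E - F) := c1.sub_right c2
  have cCE : Commute C E := aux_comm_inv hC1 hC2 c1
  have cCF : Commute C F := aux_comm_inv hC1 hC2 c2
  have cCd : Commute C (E - F) := aux_comm_inv hC1 hC2 c3
  -- selfadjointness of C and of P
  have hsaSum : ∀ x y, g₀ ((E + F) x) y = g₀ x ((E + F) y) := by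
    intro x y
    simp only [ContinuousLinearMap.add_apply, map_add, LinearMap.add_apply, hsaE x y, hsaF x y]
  have hsaC : ∀ x y, g₀ (C x) y = g₀ x (C y) := aux_inv_sa g₀ (E + F) C hC2 hsaSum
  have hsaDiff : ∀ x y, g₀ ((E - F) x) y = g₀ x ((E - F) y) := by
    intro x y
    simp only [ContinuousLinearMap.sub_apply, map_sub, LinearMap.sub_apply, hsaE x y, hsaF x y]
  have hsaP : ∀ x y, g₀ (P x) y = g₀ x (P y) := by
    intro x y
    rw [hP, ContinuousLinearMap.mul_apply, ContinuousLinearMap.mul_apply, hsaC, hsaDiff]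
    have hxy : (E - F) (C y) = C ((E - F) y) := by
      have := congrArg (fun f : V →L[ℝ] V => f y) cCd.eq
      simpa [ContinuousLinearMap.mul_apply] using this.symm
    rw [hxy]
  -- conjugation by J₀
  have hJunit1 : J₀ * (-J₀) = 1 := by rw [mul_neg, hJ₀, neg_neg]
  have hJunit2 : (-J₀) * J₀ = 1 := by rw [neg_mul, hJ₀, neg_neg]
  let uJ : (V →L[ℝ] V)ˣ := ⟨J₀, -J₀, hJunit1, hJunit2⟩
  have hJA : J₀ * A = -(A * J₀) := by rw [hAJ, neg_neg]
  have hconjA : J₀ * A * (-J₀) = -A := by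
    calc J₀ * A * (-J₀) = -(A * J₀) * (-J₀) := by rw [hJA]
      _ = A * (J₀ * J₀) := by noncomm_ring
      _ = -A := by rw [hJ₀, mul_neg_one]
  have hconjnA : J₀ * (-A) * (-J₀) = A := by
    calc J₀ * (-A) * (-J₀) = -(J₀ * A * (-J₀)) := by noncomm_ring
      _ = A := by rw [hconjA, neg_neg]
  have hJEJ : J₀ * E * (-J₀) = F := by
    have h : exp (J₀ * A * (-J₀)) = J₀ * exp A * (-J₀) := exp_units_conj uJ A
    rw [hconjA] at h
    rw [hE, hF, ← h]
  have hJFJ : J₀ * F * (-J₀) = E := by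
    have h : exp (J₀ * (-A) * (-J₀)) = J₀ * exp (-A) * (-J₀) := exp_units_conj uJ (-A)
    rw [hconjnA] at h
    rw [hE, hF, ← h]
  have hFJ : F * J₀ = J₀ * E := by
    calc F * J₀ = (J₀ * E * (-J₀)) * J₀ := by rw [hJEJ]
      _ = J₀ * E * ((-J₀) * J₀) := by rw [mul_assoc]
      _ = J₀ * E := by rw [hJunit2, mul_one]
  have hEJ : E * J₀ = J₀ * F := by
    calc E * J₀ = (J₀ * F * (-J₀)) * J₀ := by rw [hJFJ]
      _ = J₀ * F * ((-J₀) * J₀) := by rw [mul_assoc]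
      _ = J₀ * F := by rw [hJunit2, mul_one]
  have hsumJ : Commute (E + F) J₀ := by
    show (E + F) * J₀ = J₀ * (E + F)
    rw [add_mul, mul_add, hEJ, hFJ, add_comm]
  have hCJ : Commute C J₀ := aux_comm_inv hC1 hC2 hsumJ
  have hdiffJ : (E - F) * J₀ = -(J₀ * (E - F)) := by
    rw [sub_mul, mul_sub, hEJ, hFJ, neg_sub]
  have hPJ : P * J₀ = -(J₀ * P) := by
    rw [hP, mul_assoc, hdiffJ, mul_neg, ← mul_assoc, hCJ.eq, mul_assoc]
  -- 1 ± P formulas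
  have hkey1 : (E + F) * (1 - P) = F + F := by
    rw [hP, mul_sub, mul_one, ← mul_assoc, hC2, one_mul]
    abel
  have hkey2 : (E + F) * (1 + P) = E + E := by
    rw [hP, mul_add, mul_one, ← mul_assoc, hC2, one_mul]
    abel
  have h1m : 1 - P = C * (F + F) := by
    have := congrArg (fun T => C * T) hkey1
    simpa [← mul_assoc, hC1] using this
  have h1p : 1 + P = C * (E + E) := by
    have := congrArg (fun T => C * T) hkey2
    simpa [← mul_assoc, hC1] using this
  -- 1 - P² = 4 C²
  have hfact : (1 : V →L[ℝ] V) - P * P = (1 - P) * (1 + P) := by noncomm_ring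
  have hprod : ((F + F) * (E + E) : V →L[ℝ] V) = 1 + 1 + 1 + 1 := by
    rw [add_mul, mul_add, hFE]
    abel
  have hCC : Commute C (F + F) := cCF.add_right cCF
  have h1mp2 : (1 : V →L[ℝ] V) - P * P = C * C * (1 + 1 + 1 + 1) := by
    calc (1 : V →L[ℝ] V) - P * P = (C * (F + F)) * (C * (E + E)) := by rw [hfact, h1m, h1p]
      _ = C * (((F + F) * C) * (E + E)) := by rw [mul_assoc, ← mul_assoc (F + F) C (E + E)]
      _ = C * ((C * (F + F)) * (E + E)) := by rw [← hCC.eq]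
      _ = C * C * ((F + F) * (E + E)) := by
          rw [mul_assoc C (F + F) (E + E), ← mul_assoc, ← mul_assoc]
      _ = C * C * (1 + 1 + 1 + 1) := by rw [hprod]
  -- C is injective
  have hCinj : ∀ x : V, C x = 0 → x = 0 := by
    intro x hx
    have := congrArg (fun f : V →L[ℝ] V => f x) hC2
    simpa [ContinuousLinearMap.mul_apply, hx] using this.symm
  have hpos' : ∀ x, x ≠ 0 → 0 < g₀ ((1 - P * P) x) x := by
    intro x hx
    have hCx : C x ≠ 0 := fun h => hx (hCinj x h)
    have hgpos := hg₀pos (C x) hCx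
    have happ : (1 - P * P) x = C (C x) + C (C x) + C (C x) + C (C x) := by
      rw [h1mp2]
      simp [ContinuousLinearMap.mul_apply, ContinuousLinearMap.add_apply,
        ContinuousLinearMap.one_apply, map_add]
    have hsum4 : g₀ (C (C x) + C (C x) + C (C x) + C (C x)) x
        = g₀ (C (C x)) x + g₀ (C (C x)) x + g₀ (C (C x)) x + g₀ (C (C x)) x := by
      simp [map_add, LinearMap.add_apply]
    rw [happ, hsum4, hsaC]
    linarith
  -- 1 - P is a unit
  have hu2 : IsUnit ((1 : V →L[ℝ] V) + 1) := by
    refine ⟨⟨1 + 1, (2 : ℝ)⁻¹ • 1, ?_, ?_⟩, rfl⟩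
    · ext v
      have h2 : (2 : ℝ)⁻¹ + (2 : ℝ)⁻¹ = 1 := by norm_num
      show (1 + 1 : V →L[ℝ] V) (((2 : ℝ)⁻¹ • (1 : V →L[ℝ] V)) v) = v
      simp only [ContinuousLinearMap.add_apply, ContinuousLinearMap.smul_apply,
        ContinuousLinearMap.one_apply]
      rw [← add_smul, h2, one_smul]
    · ext v
      have h2 : (2 : ℝ)⁻¹ + (2 : ℝ)⁻¹ = 1 := by norm_num
      show ((2 : ℝ)⁻¹ • (1 : V →L[ℝ] V)) ((1 + 1 : V →L[ℝ] V) v) = v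
      simp only [ContinuousLinearMap.add_apply, ContinuousLinearMap.smul_apply,
        ContinuousLinearMap.one_apply, smul_add]
      rw [← add_smul, h2, one_smul]
  have hFF : (F + F : V →L[ℝ] V) = F * (1 + 1) := by rw [mul_add, mul_one]
  have huF : IsUnit F := isUnit_exp (-A)
  have hu1m : IsUnit ((1 : V →L[ℝ] V) - P) := by
    rw [h1m, hFF]
    exact ((isUnit_ringInverse.mpr hu).mul (huF.mul hu2))
  -- final identity
  have hexp2 : exp ((2 : ℝ) • A) = E * E := by
    rw [two_smul, exp_add_of_commute (Commute.refl A)]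
  have hEEC : Commute C (E * E) := cCE.mul_right cCE
  have hEE1m : (E * E) * (1 - P) = 1 + P := by
    rw [h1m, h1p, ← mul_assoc, ← hEEC.eq, mul_assoc]
    congr 1
    rw [mul_add, mul_assoc E E F, hEF, mul_one]
  have hfinal : (1 + P) * Ring.inverse (1 - P) = exp ((2 : ℝ) • A) := by
    rw [hexp2, ← hEE1m, mul_assoc, Ring.mul_inverse_cancel _ hu1m, mul_one]
  exact ⟨hsaP, hPJ, hpos', hu1m, hfinal⟩
end

section
/- On U = (0, 2π) × (−1, 1) with coordinates (φ, z) and Lebesgue measure dμ = dφ dz, let α(φ, z) = cos(kz + lφ) and β(φ, z) = i·cos(pz + qφ) with k, p ∈ πℤ, l, q ∈ ℤ, (k, l) ≠ (0, 0), (p, q) ≠ (0, 0), and (p, q) ∉ {(k, l), (−k, −l)}. Then K(α, β) = −1/(8π), where K(α, β) := −(1/2) ∫_U (Im(conj(α)·β))² dμ / ( ∫_U |α|² dμ · ∫_U |β|² dμ − ( ∫_U Re(conj(α)·β) dμ )² ). (Theorem 8.2, the case |α| ≠ |β| of the sectional curvature of the space of associated metrics on the sphere S².) -/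
open MeasureTheory

/-!
STATEMENT 14 (Theorem 8.2, case `|α| ≠ |β|`).

On `U = (0, 2π) × (−1, 1)` with coordinates `(φ, z)` and Lebesgue measure,
for `α(φ,z) = cos (k z + l φ)` and `β(φ,z) = i cos (p z + q φ)` with
`k, p ∈ πℤ`, `l, q ∈ ℤ`, `(k,l) ≠ (0,0)`, `(p,q) ≠ (0,0)` and
`(p,q) ∉ {(k,l), (−k,−l)}`, the sectional curvature of the space of
associated metrics on the sphere is `K(α, β) = −1/(8π)`.
-/

/-- The sectional curvature of the space `AM(S²)` of associated metrics in the
plane spanned by the anti-Hermitian forms given by the complex functions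
`α`, `β` on the coordinate domain `U`. -/
noncomputable def sphereSectionalCurvature (U : Set (ℝ × ℝ)) (α β : ℝ × ℝ → ℂ) : ℝ :=
  -(1 / 2) * (∫ u in U, ((starRingEnd ℂ) (α u) * β u).im ^ 2) /
    ((∫ u in U, ‖α u‖ ^ 2) * (∫ u in U, ‖β u‖ ^ 2) -
      (∫ u in U, ((starRingEnd ℂ) (α u) * β u).re) ^ 2)

section AMaux
open Real Set
open MeasureTheory Real Set

noncomputable section AMhelpers

/-- coordinate domain -/
def amU : Set (ℝ×ℝ) := Ioo (0:ℝ) (2*π) ×ˢ Ioo (-1:ℝ) 1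

lemma amU_intg (f : ℝ×ℝ→ℝ) (hf : Continuous f) : IntegrableOn f amU :=
  ((hf.continuousOn).integrableOn_compact
      ((isCompact_Icc (a := (0:ℝ)) (b := 2*π)).prod (isCompact_Icc (a := (-1:ℝ)) (b := 1)))).mono_set
      (Set.prod_mono Ioo_subset_Icc_self Ioo_subset_Icc_self)

lemma amU_fubini (f : ℝ×ℝ→ℝ) (hf : Continuous f) :
    ∫ u in amU, f u = ∫ φ in (0:ℝ)..(2*π), ∫ z in (-1:ℝ)..(1:ℝ), f (φ, z) := by
  have hint := amU_intg f hf
  rw [amU] at hint ⊢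
  rw [Measure.volume_eq_prod ℝ ℝ] at hint ⊢
  rw [setIntegral_prod f hint]
  rw [intervalIntegral.integral_of_le (by positivity : (0:ℝ) ≤ 2*π),
    integral_Ioc_eq_integral_Ioo]
  refine setIntegral_congr_fun measurableSet_Ioo fun φ _ => ?_
  rw [intervalIntegral.integral_of_le (by norm_num : (-1:ℝ) ≤ 1), integral_Ioc_eq_integral_Ioo]

lemma amCosPrim (m c A B : ℝ) (hm : m ≠ 0) :
    ∫ z in A..B, Real.cos (m*z + c) = (Real.sin (m*B+c) - Real.sin (m*A+c))/m := by
  have h : ∀ z : ℝ, HasDerivAt (fun z => Real.sin (m*z+c)/m) (Real.cos (m*z+c)) z := by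
    intro z
    have := ((Real.hasDerivAt_sin (m*z+c)).comp z
      (((hasDerivAt_id z).const_mul m).add_const c))
    have h2 := this.div_const m
    rw [show Real.cos (m*z+c) * (m*1) / m = Real.cos (m*z+c) from by field_simp] at h2
    exact h2
  rw [intervalIntegral.integral_eq_sub_of_hasDerivAt (fun z _ => h z)
    ((by continuity : Continuous fun z => Real.cos (m*z+c)).intervalIntegrable A B)]
  ring

/-- the basic oscillating integral vanishes -/
lemma amCos_integral (p q : ℤ) (h : ¬(p = 0 ∧ q = 0)) :
    ∫ u in amU, Real.cos (π*p*u.2 + q*u.1) = 0 := by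
  rw [amU_fubini _ (by fun_prop)]
  by_cases hp : p = 0
  · -- then q ≠ 0
    have hq : q ≠ 0 := fun hq => h ⟨hp, hq⟩
    have inner : ∀ φ : ℝ, (∫ z in (-1:ℝ)..(1:ℝ), Real.cos (π*p*z + q*φ))
        = 2 * Real.cos ((q:ℝ)*φ + 0) := by
      intro φ
      subst hp
      have e : (fun z : ℝ => Real.cos (π*((0:ℤ):ℝ)*z + q*φ)) = fun _ : ℝ => Real.cos ((q:ℝ)*φ + 0) := by
        funext z; norm_num
      rw [e, intervalIntegral.integral_const]
      norm_num
    simp_rw [inner]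
    rw [intervalIntegral.integral_const_mul, amCosPrim _ _ _ _ (by exact_mod_cast hq)]
    have h1 : Real.sin ((q:ℝ) * (2*π) + 0) = 0 := by
      have : ((q:ℝ) * (2*π) + 0) = (2*q : ℤ) * π := by push_cast; ring
      rw [this, Real.sin_int_mul_pi]
    have h2 : Real.sin ((q:ℝ) * 0 + 0) = 0 := by norm_num
    rw [h1, h2]
    ring
  · have inner : ∀ φ : ℝ, (∫ z in (-1:ℝ)..(1:ℝ), Real.cos (π*p*z + q*φ)) = 0 := by
      intro φ
      have hm : (π*p : ℝ) ≠ 0 := by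
        have := Real.pi_ne_zero
        have : (p:ℝ) ≠ 0 := by exact_mod_cast hp
        positivity
      rw [amCosPrim _ _ _ _ hm]
      have e1 : Real.sin (π*p*1 + q*φ) = Real.cos (π*p) * Real.sin ((q:ℝ)*φ) := by
        rw [show (π*p*1 + q*φ : ℝ) = (q:ℝ)*φ + p*π by ring, Real.sin_add,
          Real.sin_int_mul_pi]
        rw [show ((p:ℝ)*π) = π*p by ring]
        ring
      have e2 : Real.sin (π*p*(-1) + q*φ) = Real.cos (π*p) * Real.sin ((q:ℝ)*φ) := by
        rw [show (π*p*(-1) + q*φ : ℝ) = (q:ℝ)*φ + (-p : ℤ)*π by push_cast; ring,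
          Real.sin_add, Real.sin_int_mul_pi]
        rw [show ((-p:ℤ):ℝ)*π = -(π*p) by push_cast; ring, Real.cos_neg]
        ring
      rw [e1, e2]
      ring
    simp_rw [inner]
    simp

lemma amConst_integral (r : ℝ) : ∫ _u in amU, r = 4*π*r := by
  rw [amU_fubini _ (by fun_prop)]
  simp [intervalIntegral.integral_const, smul_eq_mul]
  ring

lemma amTrig (x y : ℝ) : (Real.cos x * Real.cos y)^2
    = 1/4 + (1/8)*Real.cos (2*x-2*y) + (1/8)*Real.cos (2*x+2*y)
      + (1/4)*Real.cos (2*x) + (1/4)*Real.cos (2*y) := by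
  have e1 : Real.cos (2*x-2*y) + Real.cos (2*x+2*y) = 2*Real.cos (2*x)*Real.cos (2*y) := by
    rw [Real.cos_add, Real.cos_sub]; ring
  have ex := Real.cos_two_mul x
  have ey := Real.cos_two_mul y
  linear_combination (-(1/8)) * e1 + (-(1+Real.cos (2*y))/4) * ex + (-(Real.cos x^2)/2) * ey

end AMhelpers

lemma amCosSq_integral (p q : ℤ) (h : ¬(p = 0 ∧ q = 0)) :
    ∫ u in amU, Real.cos (π*p*u.2 + q*u.1)^2 = 2*π := by
  have h2 : ¬((2*p : ℤ) = 0 ∧ (2*q : ℤ) = 0) := fun ⟨h1', h2'⟩ => h ⟨by omega, by omega⟩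
  have i0 : IntegrableOn (fun _ : ℝ×ℝ => (1/2:ℝ)) amU := amU_intg _ continuous_const
  have i1 : IntegrableOn
      (fun u : ℝ×ℝ => (1/2) * Real.cos (π*((2*p:ℤ):ℝ)*u.2 + ((2*q:ℤ):ℝ)*u.1)) amU :=
    amU_intg _ (by fun_prop)
  calc ∫ u in amU, Real.cos (π*p*u.2 + q*u.1)^2
      = ∫ u in amU, ((1/2:ℝ) + (1/2) * Real.cos (π*((2*p:ℤ):ℝ)*u.2 + ((2*q:ℤ):ℝ)*u.1)) := by
        refine setIntegral_congr_fun (measurableSet_Ioo.prod measurableSet_Ioo) fun u _ => ?_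
        rw [Real.cos_sq,
          show 2*(π*p*u.2+q*u.1) = π*((2*p:ℤ):ℝ)*u.2 + ((2*q:ℤ):ℝ)*u.1 from by push_cast; ring]
        ring
    _ = (∫ _u in amU, (1/2:ℝ))
        + ∫ u in amU, (1/2) * Real.cos (π*((2*p:ℤ):ℝ)*u.2 + ((2*q:ℤ):ℝ)*u.1) :=
        integral_add i0 i1
    _ = 4*π*(1/2) + (1/2) * ∫ u in amU, Real.cos (π*((2*p:ℤ):ℝ)*u.2 + ((2*q:ℤ):ℝ)*u.1) := by
        rw [amConst_integral, integral_const_mul]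
    _ = 2*π := by rw [amCos_integral _ _ h2]; ring

lemma amProdSq_integral (a b c d : ℤ)
    (h1 : ¬((2*a-2*c : ℤ) = 0 ∧ (2*b-2*d : ℤ) = 0))
    (h2 : ¬((2*a+2*c : ℤ) = 0 ∧ (2*b+2*d : ℤ) = 0))
    (h3 : ¬((2*a : ℤ) = 0 ∧ (2*b : ℤ) = 0))
    (h4 : ¬((2*c : ℤ) = 0 ∧ (2*d : ℤ) = 0)) :
    ∫ u in amU, (Real.cos (π*a*u.2+b*u.1) * Real.cos (π*c*u.2+d*u.1))^2 = π := by
  have i0 : IntegrableOn (fun _ : ℝ×ℝ => (1/4:ℝ)) amU := amU_intg _ continuous_const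
  have i1 : IntegrableOn
      (fun u : ℝ×ℝ => (1/8) * Real.cos (π*((2*a-2*c:ℤ):ℝ)*u.2 + ((2*b-2*d:ℤ):ℝ)*u.1)) amU :=
    amU_intg _ (by fun_prop)
  have i2 : IntegrableOn
      (fun u : ℝ×ℝ => (1/8) * Real.cos (π*((2*a+2*c:ℤ):ℝ)*u.2 + ((2*b+2*d:ℤ):ℝ)*u.1)) amU :=
    amU_intg _ (by fun_prop)
  have i3 : IntegrableOn
      (fun u : ℝ×ℝ => (1/4) * Real.cos (π*((2*a:ℤ):ℝ)*u.2 + ((2*b:ℤ):ℝ)*u.1)) amU :=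
    amU_intg _ (by fun_prop)
  have i4 : IntegrableOn
      (fun u : ℝ×ℝ => (1/4) * Real.cos (π*((2*c:ℤ):ℝ)*u.2 + ((2*d:ℤ):ℝ)*u.1)) amU :=
    amU_intg _ (by fun_prop)
  calc ∫ u in amU, (Real.cos (π*a*u.2+b*u.1) * Real.cos (π*c*u.2+d*u.1))^2
      = ∫ u in amU, ((1/4:ℝ)
          + (1/8) * Real.cos (π*((2*a-2*c:ℤ):ℝ)*u.2 + ((2*b-2*d:ℤ):ℝ)*u.1)
          + (1/8) * Real.cos (π*((2*a+2*c:ℤ):ℝ)*u.2 + ((2*b+2*d:ℤ):ℝ)*u.1)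
          + (1/4) * Real.cos (π*((2*a:ℤ):ℝ)*u.2 + ((2*b:ℤ):ℝ)*u.1)
          + (1/4) * Real.cos (π*((2*c:ℤ):ℝ)*u.2 + ((2*d:ℤ):ℝ)*u.1)) := by
        refine setIntegral_congr_fun (measurableSet_Ioo.prod measurableSet_Ioo) fun u _ => ?_
        rw [amTrig,
          show 2*(π*a*u.2+b*u.1) - 2*(π*c*u.2+d*u.1)
              = π*((2*a-2*c:ℤ):ℝ)*u.2 + ((2*b-2*d:ℤ):ℝ)*u.1 from by push_cast; ring,
          show 2*(π*a*u.2+b*u.1) + 2*(π*c*u.2+d*u.1)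
              = π*((2*a+2*c:ℤ):ℝ)*u.2 + ((2*b+2*d:ℤ):ℝ)*u.1 from by push_cast; ring,
          show 2*(π*a*u.2+b*u.1) = π*((2*a:ℤ):ℝ)*u.2 + ((2*b:ℤ):ℝ)*u.1 from by push_cast; ring,
          show 2*(π*c*u.2+d*u.1) = π*((2*c:ℤ):ℝ)*u.2 + ((2*d:ℤ):ℝ)*u.1 from by push_cast; ring]
    _ = π := by
        have i01 : IntegrableOn (fun u : ℝ×ℝ => (1/4:ℝ)
            + (1/8) * Real.cos (π*((2*a-2*c:ℤ):ℝ)*u.2 + ((2*b-2*d:ℤ):ℝ)*u.1)) amU :=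
          amU_intg _ (by fun_prop)
        have i012 : IntegrableOn (fun u : ℝ×ℝ => (1/4:ℝ)
            + (1/8) * Real.cos (π*((2*a-2*c:ℤ):ℝ)*u.2 + ((2*b-2*d:ℤ):ℝ)*u.1)
            + (1/8) * Real.cos (π*((2*a+2*c:ℤ):ℝ)*u.2 + ((2*b+2*d:ℤ):ℝ)*u.1)) amU :=
          amU_intg _ (by fun_prop)
        have i0123 : IntegrableOn (fun u : ℝ×ℝ => (1/4:ℝ)
            + (1/8) * Real.cos (π*((2*a-2*c:ℤ):ℝ)*u.2 + ((2*b-2*d:ℤ):ℝ)*u.1)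
            + (1/8) * Real.cos (π*((2*a+2*c:ℤ):ℝ)*u.2 + ((2*b+2*d:ℤ):ℝ)*u.1)
            + (1/4) * Real.cos (π*((2*a:ℤ):ℝ)*u.2 + ((2*b:ℤ):ℝ)*u.1)) amU :=
          amU_intg _ (by fun_prop)
        rw [integral_add i0123 i4,
          integral_add i012 i3,
          integral_add i01 i2,
          integral_add i0 i1,
          integral_const_mul, integral_const_mul, integral_const_mul, integral_const_mul,
          amConst_integral, amCos_integral _ _ h1, amCos_integral _ _ h2,
          amCos_integral _ _ h3, amCos_integral _ _ h4]
        ring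

end AMaux

open Real Set in
theorem space_of_associated_metrics.stmt_14
    (a b c d : ℤ)
    (hab : (a, b) ≠ (0, 0)) (hcd : (c, d) ≠ (0, 0))
    (hne : (c, d) ≠ (a, b)) (hne' : (c, d) ≠ (-a, -b)) :
    sphereSectionalCurvature
      (Set.Ioo (0 : ℝ) (2 * Real.pi) ×ˢ Set.Ioo (-1 : ℝ) (1 : ℝ))
      (fun u => (Real.cos (Real.pi * a * u.2 + b * u.1) : ℂ))
      (fun u => Complex.I * (Real.cos (Real.pi * c * u.2 + d * u.1) : ℂ))
      = -(1 / (8 * Real.pi)) := by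
  have hab' : ¬(a = 0 ∧ b = 0) := by
    rintro ⟨rfl, rfl⟩; exact hab rfl
  have hcd' : ¬(c = 0 ∧ d = 0) := by
    rintro ⟨rfl, rfl⟩; exact hcd rfl
  have h1 : ¬((2*a-2*c : ℤ) = 0 ∧ (2*b-2*d : ℤ) = 0) := by
    rintro ⟨h1', h2'⟩
    exact hne (by rw [Prod.ext_iff]; constructor <;> [skip; skip] <;> omega)
  have h2 : ¬((2*a+2*c : ℤ) = 0 ∧ (2*b+2*d : ℤ) = 0) := by
    rintro ⟨h1', h2'⟩
    exact hne' (by rw [Prod.ext_iff]; constructor <;> [skip; skip] <;> omega)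
  have h3 : ¬((2*a : ℤ) = 0 ∧ (2*b : ℤ) = 0) := by
    rintro ⟨h1', h2'⟩; exact hab' ⟨by omega, by omega⟩
  have h4 : ¬((2*c : ℤ) = 0 ∧ (2*d : ℤ) = 0) := by
    rintro ⟨h1', h2'⟩; exact hcd' ⟨by omega, by omega⟩
  have hU : (Set.Ioo (0 : ℝ) (2 * Real.pi) ×ˢ Set.Ioo (-1 : ℝ) (1 : ℝ)) = amU := rfl
  rw [sphereSectionalCurvature, hU]
  have eim : (fun u : ℝ×ℝ => (((starRingEnd ℂ) ((Real.cos (π*a*u.2+b*u.1) : ℝ) : ℂ))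
      * (Complex.I * ((Real.cos (π*c*u.2+d*u.1) : ℝ) : ℂ))).im ^ 2)
      = fun u : ℝ×ℝ => (Real.cos (π*a*u.2+b*u.1) * Real.cos (π*c*u.2+d*u.1))^2 := by
    funext u
    simp only [Complex.conj_ofReal, Complex.mul_im, Complex.mul_re, Complex.ofReal_re,
      Complex.ofReal_im, Complex.I_re, Complex.I_im]
    ring
  have ere : (fun u : ℝ×ℝ => (((starRingEnd ℂ) ((Real.cos (π*a*u.2+b*u.1) : ℝ) : ℂ))
      * (Complex.I * ((Real.cos (π*c*u.2+d*u.1) : ℝ) : ℂ))).re)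
      = fun _ : ℝ×ℝ => (0:ℝ) := by
    funext u
    simp only [Complex.conj_ofReal, Complex.mul_re, Complex.mul_im, Complex.ofReal_re,
      Complex.ofReal_im, Complex.I_re, Complex.I_im]
    ring
  have ea : (fun u : ℝ×ℝ => ‖((Real.cos (π*a*u.2+b*u.1) : ℝ) : ℂ)‖ ^ 2)
      = fun u : ℝ×ℝ => Real.cos (π*a*u.2+b*u.1)^2 := by
    funext u
    rw [Complex.norm_real, Real.norm_eq_abs, sq_abs]
  have eb : (fun u : ℝ×ℝ => ‖Complex.I * ((Real.cos (π*c*u.2+d*u.1) : ℝ) : ℂ)‖ ^ 2)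
      = fun u : ℝ×ℝ => Real.cos (π*c*u.2+d*u.1)^2 := by
    funext u
    rw [norm_mul, Complex.norm_I, Complex.norm_real, Real.norm_eq_abs, one_mul, sq_abs]
  rw [eim, ere, ea, eb,
    amProdSq_integral a b c d h1 h2 h3 h4,
    amCosSq_integral a b hab', amCosSq_integral c d hcd']
  rw [integral_zero]
  have hπ : π ≠ 0 := Real.pi_ne_zero
  field_simp
  ring
end

section
/- On U = (0, 2π) × (−1, 1) with coordinates (φ, z) and Lebesgue measure dμ = dφ dz, let α(φ, z) = cos(kz + lφ) with k ∈ πℤ, l ∈ ℤ, (k, l) ≠ (0, 0), and β = i·α. Then K(α, β) = −3/(16π), where K(α, β) := −(1/2) ∫_U (Im(conj(α)·β))² dμ / ( ∫_U |α|² dμ · ∫_U |β|² dμ − ( ∫_U Re(conj(α)·β) dμ )² ); i.e. the holomorphic sectional curvature of the space of associated metrics on S² in the direction of a nonconstant basis function α equals −3/(16π), while for α = 1, β = i it equals −1/(8π). (Theorem 8.2, holomorphic sectional curvature cases.) -/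
open MeasureTheory

section helpers
open Set Real

noncomputable def S : Set (ℝ × ℝ) := Ioo (0:ℝ) (2*π) ×ˢ Ioo (-1:ℝ) 1

lemma volS : ((volume : Measure (ℝ×ℝ)) S).toReal = 4*π := by
  rw [S, Measure.volume_eq_prod, Measure.prod_prod, Real.volume_Ioo, Real.volume_Ioo,
    show (2*π-0:ℝ) = 2*π by ring, show (1 - -1 : ℝ) = 2 by norm_num,
    ← ENNReal.ofReal_mul (by positivity), ENNReal.toReal_ofReal (by positivity)]
  ring

lemma intS {f : ℝ×ℝ → ℝ} (hf : Continuous f) : IntegrableOn f S := by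
  refine (hf.continuousOn.integrableOn_compact (isCompact_Icc.prod isCompact_Icc :
    IsCompact (Icc (0:ℝ) (2*π) ×ˢ Icc (-1:ℝ) 1))).mono_set ?_
  exact Set.prod_mono Ioo_subset_Icc_self Ioo_subset_Icc_self

lemma key {c d A B : ℝ} (hAB : A ≤ B) (h1 : sin (c*B + d) = sin (c*A + d)) (hc0 : c ≠ 0) :
    ∫ z in Ioo A B, cos (c*z + d) = 0 := by
  rw [← integral_Ioc_eq_integral_Ioo, ← intervalIntegral.integral_of_le hAB,
    intervalIntegral.integral_comp_mul_add Real.cos hc0 d, integral_cos, h1]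
  simp

lemma osc (a b : ℤ) (hab : ¬(a = 0 ∧ b = 0)) (m : ℕ) (hm : m ≠ 0) :
    ∫ u in S, cos ((m:ℝ) * (π * a * u.2 + b * u.1)) = 0 := by
  have hcont : Continuous fun u : ℝ×ℝ => cos ((m:ℝ) * (π * a * u.2 + b * u.1)) := by
    fun_prop
  rw [S, Measure.volume_eq_prod,
    setIntegral_prod _ (by rw [← Measure.volume_eq_prod]; exact intS hcont)]
  rcases eq_or_ne a 0 with ha | ha
  · -- a = 0, b ≠ 0
    have hb : b ≠ 0 := fun h => hab ⟨ha, h⟩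
    subst ha
    have hinner : ∀ φ : ℝ, ∫ z in Ioo (-1:ℝ) 1, cos ((m:ℝ) * (π * (0:ℤ) * z + b * φ))
        = 2 * cos ((m:ℝ) * (b * φ)) := by
      intro φ
      have : ∀ z : ℝ, cos ((m:ℝ) * (π * (0:ℤ) * z + b * φ)) = cos ((m:ℝ) * (b * φ)) := by
        intro z; norm_num
      simp only [this]
      rw [setIntegral_const, measureReal_def, Real.volume_Ioo, show (1 - -1 : ℝ) = 2 by norm_num,
        ENNReal.toReal_ofReal (by norm_num)]
      simp [smul_eq_mul]
    simp only [hinner]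
    have : ∀ φ : ℝ, 2 * cos ((m:ℝ) * ((b:ℝ) * φ)) = 2 * cos (((m:ℝ)*b) * φ + 0) := by
      intro φ; ring_nf
    simp only [this]
    rw [integral_const_mul, key (by positivity) ?_ ?_, mul_zero]
    · have h2 : ((m:ℝ)*b) * (2*π) + 0 = (2*(m:ℤ)*b : ℤ) * π := by push_cast; ring
      have h0 : ((m:ℝ)*b) * 0 + 0 = ((0:ℤ):ℝ) * π := by push_cast; ring
      rw [h2, h0, Real.sin_int_mul_pi, Real.sin_int_mul_pi]
    · have : (m:ℝ) ≠ 0 := Nat.cast_ne_zero.2 hm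
      have : (b:ℝ) ≠ 0 := Int.cast_ne_zero.2 hb
      positivity
  · -- a ≠ 0
    have hinner : ∀ φ : ℝ, ∫ z in Ioo (-1:ℝ) 1, cos ((m:ℝ) * (π * a * z + b * φ)) = 0 := by
      intro φ
      have heq : ∀ z : ℝ, cos ((m:ℝ) * (π * a * z + b * φ))
          = cos (((m:ℝ)*π*a) * z + ((m:ℝ)*(b*φ))) := by intro z; ring_nf
      simp only [heq]
      refine key (by norm_num) ?_ ?_
      · have hs : sin ((m:ℝ)*π*a) = 0 := by
          have : (m:ℝ)*π*a = ((m*a : ℤ):ℝ) * π := by push_cast; ring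
          rw [this, Real.sin_int_mul_pi]
        have hs' : sin (-((m:ℝ)*π*a)) = 0 := by rw [Real.sin_neg, hs, neg_zero]
        rw [show ((m:ℝ)*π*a) * 1 + ((m:ℝ)*(b*φ)) = ((m:ℝ)*π*a) + ((m:ℝ)*(b*φ)) by ring,
          show ((m:ℝ)*π*a) * (-1) + ((m:ℝ)*(b*φ)) = -((m:ℝ)*π*a) + ((m:ℝ)*(b*φ)) by ring,
          Real.sin_add, Real.sin_add, hs, hs', Real.cos_neg]
      · have h1 : (m:ℝ) ≠ 0 := Nat.cast_ne_zero.2 hm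
        have h2 : (a:ℝ) ≠ 0 := Int.cast_ne_zero.2 ha
        positivity
    simp only [hinner, integral_zero]

lemma cos_four (x : ℝ) : cos x ^ 4 = 3/8 + cos (2*x)/2 + cos (4*x)/8 := by
  have h1 : cos x ^ 4 = (cos x ^ 2) ^ 2 := by ring
  have h2 := Real.cos_sq (2*x)
  have h3 : (2:ℝ)*(2*x) = 4*x := by ring
  rw [h3] at h2
  rw [h1, Real.cos_sq x]
  nlinarith [h2]

lemma intcos2 (a b : ℤ) (hab : ¬(a = 0 ∧ b = 0)) :
    ∫ u in S, cos (π * a * u.2 + b * u.1) ^ 2 = 2*π := by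
  have hosc := osc a b hab 2 (by norm_num)
  norm_num at hosc
  have heq : ∀ u : ℝ×ℝ, cos (π * a * u.2 + b * u.1) ^ 2
      = 1/2 + cos (2 * (π * a * u.2 + b * u.1)) / 2 := fun u => Real.cos_sq _
  simp only [heq]
  rw [integral_add (intS (by fun_prop)) (intS (by fun_prop))]
  simp only [MeasureTheory.integral_div]
  rw [hosc, setIntegral_const, measureReal_def, volS, smul_eq_mul]
  ring

lemma intcos4 (a b : ℤ) (hab : ¬(a = 0 ∧ b = 0)) :
    ∫ u in S, cos (π * a * u.2 + b * u.1) ^ 4 = 3*π/2 := by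
  have h2 := osc a b hab 2 (by norm_num)
  have h4 := osc a b hab 4 (by norm_num)
  norm_num at h2 h4
  have heq : ∀ u : ℝ×ℝ, cos (π * a * u.2 + b * u.1) ^ 4
      = 3/8 + (cos (2 * (π * a * u.2 + b * u.1)) / 2 + cos (4 * (π * a * u.2 + b * u.1)) / 8) :=
    fun u => by rw [cos_four]; ring
  simp only [heq]
  rw [integral_add (intS (by fun_prop)) (intS (by fun_prop)),
    integral_add (intS (by fun_prop)) (intS (by fun_prop))]
  simp only [MeasureTheory.integral_div]
  rw [h2, h4, setIntegral_const, measureReal_def, volS, smul_eq_mul]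
  ring

lemma measS : MeasurableSet S := (measurableSet_Ioo.prod measurableSet_Ioo)

theorem space_of_associated_metrics.stmt_15
    (a b : ℤ) (hab : (a, b) ≠ (0, 0)) :
    (sphereSectionalCurvature
        (Set.Ioo (0 : ℝ) (2 * Real.pi) ×ˢ Set.Ioo (-1 : ℝ) (1 : ℝ))
        (fun u => (Real.cos (Real.pi * a * u.2 + b * u.1) : ℂ))
        (fun u => Complex.I * (Real.cos (Real.pi * a * u.2 + b * u.1) : ℂ))
        = -(3 / (16 * Real.pi))) ∧
    (sphereSectionalCurvature
        (Set.Ioo (0 : ℝ) (2 * Real.pi) ×ˢ Set.Ioo (-1 : ℝ) (1 : ℝ))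
        (fun _ => (1 : ℂ)) (fun _ => Complex.I)
        = -(1 / (8 * Real.pi))) := by
  have hab' : ¬(a = 0 ∧ b = 0) := by
    intro ⟨h1, h2⟩; exact hab (by simp [h1, h2])
  have hS : Set.Ioo (0 : ℝ) (2 * Real.pi) ×ˢ Set.Ioo (-1 : ℝ) (1 : ℝ) = S := rfl
  have hpi : Real.pi ≠ 0 := Real.pi_ne_zero
  constructor
  · rw [hS, sphereSectionalCurvature]
    have h1 : ∫ u in S, ((starRingEnd ℂ) ((cos (π * a * u.2 + b * u.1) : ℝ) : ℂ) *
        (Complex.I * ((cos (π * a * u.2 + b * u.1) : ℝ) : ℂ))).im ^ 2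
        = ∫ u in S, cos (π * a * u.2 + b * u.1) ^ 4 := by
      refine setIntegral_congr_fun measS fun u _ => ?_
      set x := cos (π * a * u.2 + b * u.1) with hx
      simp only [Complex.conj_ofReal, Complex.mul_im, Complex.mul_re, Complex.ofReal_re,
        Complex.ofReal_im, Complex.I_re, Complex.I_im]
      ring
    have h2 : ∫ u in S, ‖((cos (π * a * u.2 + b * u.1) : ℝ) : ℂ)‖ ^ 2
        = ∫ u in S, cos (π * a * u.2 + b * u.1) ^ 2 := by
      refine setIntegral_congr_fun measS fun u _ => ?_
      rw [Complex.norm_real, Real.norm_eq_abs, sq_abs]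
    have h3 : ∫ u in S, ‖(Complex.I * ((cos (π * a * u.2 + b * u.1) : ℝ) : ℂ))‖ ^ 2
        = ∫ u in S, cos (π * a * u.2 + b * u.1) ^ 2 := by
      refine setIntegral_congr_fun measS fun u _ => ?_
      rw [norm_mul, Complex.norm_I, one_mul, Complex.norm_real, Real.norm_eq_abs, sq_abs]
    have h4 : ∫ u in S, ((starRingEnd ℂ) ((cos (π * a * u.2 + b * u.1) : ℝ) : ℂ) *
        (Complex.I * ((cos (π * a * u.2 + b * u.1) : ℝ) : ℂ))).re = ∫ u in S, (0:ℝ) := by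
      refine setIntegral_congr_fun measS fun u _ => ?_
      set x := cos (π * a * u.2 + b * u.1) with hx
      simp only [Complex.conj_ofReal, Complex.mul_re, Complex.ofReal_re,
        Complex.ofReal_im, Complex.I_re, Complex.I_im]
      ring
    rw [h1, h2, h3, h4, intcos4 a b hab', intcos2 a b hab', integral_zero]
    field_simp
    ring
  · rw [hS, sphereSectionalCurvature]
    have h1 : ∫ u in S, ((starRingEnd ℂ) (1:ℂ) * Complex.I).im ^ 2 = 4*π := by
      simp [setIntegral_const, measureReal_def, volS]
    have h2 : ∫ u in S, ‖(1:ℂ)‖ ^ 2 = 4*π := by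
      simp [setIntegral_const, measureReal_def, volS]
    have h3 : ∫ u in S, ‖Complex.I‖ ^ 2 = 4*π := by
      simp [setIntegral_const, measureReal_def, volS]
    have h4 : ∫ u in S, ((starRingEnd ℂ) (1:ℂ) * Complex.I).re = 0 := by
      simp
    rw [h1, h2, h3, h4]
    field_simp
    ring

end helpers
end

section
/- Let (V, g) be a finite-dimensional real inner product space, J an almost complex structure on V with g(JX, JY) = g(X, Y), and h a symmetric bilinear form on V which is anti-Hermitian, i.e. h(JX, JY) = −h(X, Y) for all X, Y. Let ξ ∈ V, ξ ≠ 0, and suppose that h(ξ, ξ) = 0, h(ξ, Jξ) = 0, and that for every u ∈ V one has g(ξ, ξ)·h(u, u) = g(ξ, u)·h(u, ξ) − g(Jξ, u)·h(u, Jξ). Then h = 0. (The linear-algebra core of Lemma 9.2: injectivity of the symbol of the operator F_g, which yields finite dimensionality of the premoduli space of critical associated metrics of constant scalar curvature in Theorem 9.1.) -/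
/-!
STATEMENT 17 (linear-algebra core of Lemma 9.2).

Let `(V, g)` be a finite-dimensional real inner product space, `J` a
compatible almost complex structure and `h` a symmetric anti-Hermitian
bilinear form (`h (J X, J Y) = -h (X, Y)`).  If `ξ ≠ 0` satisfies
`h (ξ, ξ) = 0`, `h (ξ, J ξ) = 0` and
`g (ξ, ξ) h (u, u) = g (ξ, u) h (u, ξ) - g (J ξ, u) h (u, J ξ)` for every
`u`, then `h = 0`.
-/

theorem space_of_associated_metrics.stmt_17
    {V : Type*} [AddCommGroup V] [Module ℝ V] [FiniteDimensional ℝ V]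
    (g : V →ₗ[ℝ] V →ₗ[ℝ] ℝ)
    (hgsym : ∀ x y, g x y = g y x)
    (hgpos : ∀ x, x ≠ 0 → 0 < g x x)
    (J : Module.End ℝ V) (hJ : J * J = -1)
    (hcomp : ∀ x y, g (J x) (J y) = g x y)
    (h : V →ₗ[ℝ] V →ₗ[ℝ] ℝ)
    (hhsym : ∀ x y, h x y = h y x)
    (hanti : ∀ x y, h (J x) (J y) = -(h x y))
    (ξ : V) (hξ : ξ ≠ 0)
    (h₁ : h ξ ξ = 0) (h₂ : h ξ (J ξ) = 0)
    (h₃ : ∀ u, g ξ ξ * h u u = g ξ u * h u ξ - g (J ξ) u * h u (J ξ)) :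
    h = 0 := by
  have ha : 0 < g ξ ξ := hgpos ξ hξ
  have ha' : g ξ ξ ≠ 0 := ne_of_gt ha
  have hJJ : ∀ x : V, J (J x) = -x := by
    intro x
    have := congrArg (fun f : Module.End ℝ V => f x) hJ
    simpa [Module.End.mul_apply] using this
  -- g ξ (J ξ) = 0
  have gJ : g ξ (J ξ) = 0 := by
    have e := hcomp ξ (J ξ)
    rw [hJJ] at e
    simp only [map_neg] at e
    have := hgsym (J ξ) ξ
    linarith
  have gJ' : g (J ξ) ξ = 0 := by rw [hgsym]; exact gJ
  have gJJ : g (J ξ) (J ξ) = g ξ ξ := hcomp ξ ξ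
  have hJξJξ : h (J ξ) (J ξ) = 0 := by rw [hanti, h₁]; ring
  have hJξξ : h (J ξ) ξ = 0 := by rw [hhsym]; exact h₂
  -- Step 1: h u ξ = 0 for all u
  have step1 : ∀ u, h u ξ = 0 := by
    intro u
    have e1 := h₃ (u + ξ)
    have e2 := h₃ (u - ξ)
    simp only [map_add, map_sub, LinearMap.add_apply, LinearMap.sub_apply,
      h₁, h₂, gJ, gJ', hJξξ] at e1 e2
    rw [hhsym ξ u] at e1 e2
    have key : g ξ ξ * h u ξ = 0 := by nlinarith [e1, e2]
    exact (mul_eq_zero.mp key).resolve_left ha'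
  -- Step 2: h u (J ξ) = 0 for all u
  have step2 : ∀ u, h u (J ξ) = 0 := by
    intro u
    have e1 := h₃ (u + J ξ)
    have e2 := h₃ (u - J ξ)
    simp only [map_add, map_sub, LinearMap.add_apply, LinearMap.sub_apply,
      gJ, gJ', gJJ, hJξJξ, hJξξ, step1 u, step1 (J ξ)] at e1 e2
    rw [hhsym (J ξ) u] at e1 e2
    have key : g ξ ξ * h u (J ξ) = 0 := by nlinarith [e1, e2]
    exact (mul_eq_zero.mp key).resolve_left ha'
  -- diagonal vanishes
  have diag : ∀ u, h u u = 0 := by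
    intro u
    have e := h₃ u
    rw [step1 u, step2 u] at e
    have : g ξ ξ * h u u = 0 := by linarith
    exact (mul_eq_zero.mp this).resolve_left ha'
  ext x y
  have e := diag (x + y)
  simp only [map_add, LinearMap.add_apply] at e
  rw [hhsym y x, diag x, diag y] at e
  simp only [LinearMap.zero_apply]
  linarith
end

section
/- Let n ≥ 1, let g₀ be an invertible real n×n matrix, let B be a real n×n matrix with tr B = 0, and let β ∈ ℝ, β ≠ 0. For t with βt + 1 > 0 define g(t) := (βt + 1)^{4/n} · g₀ · exp((ln(βt + 1)/β)·B). Then g(t) is invertible, the matrix A(t) := g(t)⁻¹ · g′(t) equals (4β/n)(βt + 1)⁻¹·I + (βt + 1)⁻¹·B, it satisfies the geodesic equation A′(t) + (1/4)(tr A(t))·A(t) = 0 of the connection ∇̄, and A(0) = (4β/n)·I + B. (The geodesic verification of Theorem 2.4, part 2, for the non-Riemannian connection ∇̄ on the space of Riemannian metrics.) -/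
noncomputable section
namespace Stmt18Aux
section L
attribute [local instance] Matrix.linftyOpNormedRing Matrix.linftyOpNormedAlgebra

/-- `HasDerivAt` with respect to the `L∞` operator norm instances. -/
def LHasDerivAt {n : ℕ} (f : ℝ → Matrix (Fin n) (Fin n) ℝ)
    (D : Matrix (Fin n) (Fin n) ℝ) (t : ℝ) : Prop :=
  HasDerivAt f D t

theorem LHasDerivAt_iff {n : ℕ} (f : ℝ → Matrix (Fin n) (Fin n) ℝ)
    (D : Matrix (Fin n) (Fin n) ℝ) (t : ℝ) :
    LHasDerivAt f D t ↔
      Filter.Tendsto (slope f t) (nhdsWithin t {t}ᶜ) (nhds D) :=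
  hasDerivAt_iff_tendsto_slope

theorem exp_mul_exp_neg {n : ℕ} (M : Matrix (Fin n) (Fin n) ℝ) :
    NormedSpace.exp M * NormedSpace.exp (-M) = 1 := by
  erw [← NormedSpace.exp_add_of_commute ((Commute.refl M).neg_right), add_neg_cancel,
    NormedSpace.exp_zero]

theorem exp_neg_mul_exp {n : ℕ} (M : Matrix (Fin n) (Fin n) ℝ) :
    NormedSpace.exp (-M) * NormedSpace.exp M = 1 := by
  erw [← NormedSpace.exp_add_of_commute ((Commute.refl M).neg_left), neg_add_cancel,
    NormedSpace.exp_zero]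

theorem key {n : ℕ} (g₀ B : Matrix (Fin n) (Fin n) ℝ) (β t : ℝ)
    (hβ : β ≠ 0) (hv : 0 < β * t + 1) :
    LHasDerivAt
      (fun x => ((β * x + 1) ^ ((4 : ℝ) / (n : ℝ))) •
        (g₀ * NormedSpace.exp ((Real.log (β * x + 1) / β) • B)))
      ((((β * t + 1) ^ ((4 : ℝ) / (n : ℝ))) •
          (g₀ * NormedSpace.exp ((Real.log (β * t + 1) / β) • B))) *
        (((4 * β / (n : ℝ)) * (β * t + 1)⁻¹) • (1 : Matrix (Fin n) (Fin n) ℝ)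
          + (β * t + 1)⁻¹ • B)) t := by
  have hlin : HasDerivAt (fun x : ℝ => β * x + 1) β t := by
    simpa using ((hasDerivAt_id t).const_mul β).add_const 1
  have hs : HasDerivAt (fun x : ℝ => (β * x + 1) ^ ((4 : ℝ) / (n : ℝ)))
      (β * ((4 : ℝ) / (n : ℝ)) * (β * t + 1) ^ ((4 : ℝ) / (n : ℝ) - 1)) t :=
    hlin.rpow_const (Or.inl hv.ne')
  have hu : HasDerivAt (fun x : ℝ => Real.log (β * x + 1) / β)
      (β / (β * t + 1) / β) t := (hlin.log hv.ne').div_const β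
  have hexp : HasDerivAt (fun s : ℝ => NormedSpace.exp (s • B))
      (NormedSpace.exp ((Real.log (β * t + 1) / β) • B) * B)
      (Real.log (β * t + 1) / β) := hasDerivAt_exp_smul_const B _
  have hEd : HasDerivAt (fun x => NormedSpace.exp ((Real.log (β * x + 1) / β) • B))
      ((β / (β * t + 1) / β) •
        (NormedSpace.exp ((Real.log (β * t + 1) / β) • B) * B)) t := by
    exact hexp.scomp (x := t) hu
  have hgE := hEd.const_mul g₀
  have hgc := hs.smul hgE
  have hc : β / (β * t + 1) / β = (β * t + 1)⁻¹ := by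
    field_simp
  have hsc : β * ((4 : ℝ) / (n : ℝ)) * (β * t + 1) ^ ((4 : ℝ) / (n : ℝ) - 1)
      = (β * t + 1) ^ ((4 : ℝ) / (n : ℝ)) * (4 * β / (n : ℝ) * (β * t + 1)⁻¹) := by
    rw [Real.rpow_sub hv, Real.rpow_one]
    field_simp
  unfold LHasDerivAt
  refine hgc.congr_deriv ?_
  rw [hc, hsc]
  simp only [mul_one, mul_add, smul_mul_assoc, mul_smul_comm, smul_smul, mul_assoc]
  module

end L
end Stmt18Aux
end

attribute [local instance] Matrix.normedAddCommGroup Matrix.normedSpace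

noncomputable section
namespace Stmt18Aux

theorem transfer {n : ℕ} (f : ℝ → Matrix (Fin n) (Fin n) ℝ)
    (D : Matrix (Fin n) (Fin n) ℝ) (t : ℝ)
    (h : LHasDerivAt f D t) : HasDerivAt f D t := by
  exact hasDerivAt_iff_tendsto_slope.mpr ((LHasDerivAt_iff f D t).mp h)

end Stmt18Aux
end

/-!
STATEMENT 18 (geodesic verification in Theorem 2.4, part 2).

For `n ≥ 1`, an invertible real `n × n` matrix `g₀`, a traceless matrix `B`
and `β ≠ 0`, the curve `g(t) = (βt+1)^{4/n} g₀ exp((ln(βt+1)/β) B)` (for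
`βt + 1 > 0`) is invertible, `A(t) = g(t)⁻¹ g'(t)` equals
`(4β/n)(βt+1)⁻¹ 1 + (βt+1)⁻¹ B`, satisfies the geodesic equation
`A' + (1/4)(tr A) A = 0` of the non-Riemannian connection `∇̄`, and
`A(0) = (4β/n) 1 + B`.
-/

theorem space_of_associated_metrics.stmt_18
    (n : ℕ) (hn : 1 ≤ n)
    (g₀ B : Matrix (Fin n) (Fin n) ℝ)
    (hg₀ : IsUnit g₀)
    (hB : Matrix.trace B = 0)
    (β : ℝ) (hβ : β ≠ 0) :
    ∀ gc Ac : ℝ → Matrix (Fin n) (Fin n) ℝ,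
      gc = (fun t => ((β * t + 1) ^ ((4 : ℝ) / (n : ℝ))) •
              (g₀ * NormedSpace.exp ((Real.log (β * t + 1) / β) • B))) →
      Ac = (fun t => (gc t)⁻¹ * deriv gc t) →
      (∀ t : ℝ, 0 < β * t + 1 →
        IsUnit (gc t) ∧
        Ac t = ((4 * β / (n : ℝ)) * (β * t + 1)⁻¹) • (1 : Matrix (Fin n) (Fin n) ℝ)
                 + (β * t + 1)⁻¹ • B ∧
        deriv Ac t + (1 / 4 * Matrix.trace (Ac t)) • Ac t = 0) ∧
      Ac 0 = (4 * β / (n : ℝ)) • (1 : Matrix (Fin n) (Fin n) ℝ) + B := by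
  intro gc Ac hgc hAc
  have hn0 : (n : ℝ) ≠ 0 := Nat.cast_ne_zero.mpr (by omega)
  have hdet : IsUnit g₀.det := (Matrix.isUnit_iff_isUnit_det g₀).mp hg₀
  have main : ∀ t : ℝ, 0 < β * t + 1 →
      IsUnit (gc t) ∧
      Ac t = ((4 * β / (n : ℝ)) * (β * t + 1)⁻¹) • (1 : Matrix (Fin n) (Fin n) ℝ)
               + (β * t + 1)⁻¹ • B := by
    intro t hv
    have hgct : gc t = ((β * t + 1) ^ ((4 : ℝ) / (n : ℝ))) •
        (g₀ * NormedSpace.exp ((Real.log (β * t + 1) / β) • B)) := by rw [hgc]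
    have hEE : NormedSpace.exp ((Real.log (β * t + 1) / β) • B) *
        NormedSpace.exp (-((Real.log (β * t + 1) / β) • B)) = 1 :=
      Stmt18Aux.exp_mul_exp_neg _
    have hEE' : NormedSpace.exp (-((Real.log (β * t + 1) / β) • B)) *
        NormedSpace.exp ((Real.log (β * t + 1) / β) • B) = 1 :=
      Stmt18Aux.exp_neg_mul_exp _
    have hvpos : (0 : ℝ) < (β * t + 1) ^ ((4 : ℝ) / (n : ℝ)) := Real.rpow_pos_of_pos hv _
    set C : Matrix (Fin n) (Fin n) ℝ :=
      (((β * t + 1) ^ ((4 : ℝ) / (n : ℝ)))⁻¹) •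
        (NormedSpace.exp (-((Real.log (β * t + 1) / β) • B)) * g₀⁻¹) with hC
    have hgcC : gc t * C = 1 := by
      rw [hgct, hC, smul_mul_assoc, mul_smul_comm, smul_smul, mul_inv_cancel₀ hvpos.ne',
        one_smul, mul_assoc g₀, ← mul_assoc (NormedSpace.exp ((Real.log (β * t + 1) / β) • B)),
        hEE, one_mul, Matrix.mul_nonsing_inv g₀ hdet]
    have hCgc : C * gc t = 1 := by
      rw [hgct, hC, smul_mul_assoc, mul_smul_comm, smul_smul, inv_mul_cancel₀ hvpos.ne',
        one_smul, mul_assoc (NormedSpace.exp (-((Real.log (β * t + 1) / β) • B))),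
        ← mul_assoc g₀⁻¹, Matrix.nonsing_inv_mul g₀ hdet, one_mul, hEE']
    have hunit : IsUnit (gc t) := by
      have := invertibleOfRightInverse _ _ hgcC
      exact isUnit_of_invertible _
    have hinvC : (gc t)⁻¹ = C := Matrix.inv_eq_right_inv hgcC
    have hD : HasDerivAt gc
        ((((β * t + 1) ^ ((4 : ℝ) / (n : ℝ))) •
          (g₀ * NormedSpace.exp ((Real.log (β * t + 1) / β) • B))) *
          (((4 * β / (n : ℝ)) * (β * t + 1)⁻¹) • (1 : Matrix (Fin n) (Fin n) ℝ)
            + (β * t + 1)⁻¹ • B)) t := by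
      rw [hgc]
      exact Stmt18Aux.transfer _ _ _ (Stmt18Aux.key g₀ B β t hβ hv)
    refine ⟨hunit, ?_⟩
    rw [hAc]
    show (gc t)⁻¹ * deriv gc t = _
    erw [hD.deriv, hinvC, ← hgct, ← mul_assoc, hCgc, one_mul]
  refine ⟨fun t hv => ⟨(main t hv).1, (main t hv).2, ?_⟩, ?_⟩
  · have hcont : Continuous fun τ : ℝ => β * τ + 1 := by continuity
    have hopen : ∀ᶠ τ in nhds t, 0 < β * τ + 1 :=
      (isOpen_lt continuous_const hcont).mem_nhds hv
    have hEv : Ac =ᶠ[nhds t] fun τ =>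
        ((4 * β / (n : ℝ)) * (β * τ + 1)⁻¹) • (1 : Matrix (Fin n) (Fin n) ℝ)
          + (β * τ + 1)⁻¹ • B :=
      hopen.mono fun τ hτ => (main τ hτ).2
    have hlin : HasDerivAt (fun x : ℝ => β * x + 1) β t := by
      simpa using ((hasDerivAt_id t).const_mul β).add_const 1
    have hinv : HasDerivAt (fun τ : ℝ => (β * τ + 1)⁻¹) (-β / (β * t + 1) ^ 2) t :=
      hlin.inv hv.ne'
    have hAd : HasDerivAt (fun τ =>
        ((4 * β / (n : ℝ)) * (β * τ + 1)⁻¹) • (1 : Matrix (Fin n) (Fin n) ℝ)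
          + (β * τ + 1)⁻¹ • B)
        ((4 * β / (n : ℝ) * (-β / (β * t + 1) ^ 2)) • (1 : Matrix (Fin n) (Fin n) ℝ)
          + (-β / (β * t + 1) ^ 2) • B) t :=
      ((hinv.const_mul (4 * β / (n : ℝ))).smul_const _).add (hinv.smul_const B)
    have hderivAc : deriv Ac t
        = (4 * β / (n : ℝ) * (-β / (β * t + 1) ^ 2)) • (1 : Matrix (Fin n) (Fin n) ℝ)
          + (-β / (β * t + 1) ^ 2) • B := by
      erw [hEv.deriv_eq, hAd.deriv]
    rw [hderivAc, (main t hv).2]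
    rw [Matrix.trace_add, Matrix.trace_smul, Matrix.trace_smul, Matrix.trace_one, hB,
      smul_zero, add_zero, smul_eq_mul, Fintype.card_fin]
    match_scalars <;> field_simp <;> ring
  · have h0 : (0 : ℝ) < β * 0 + 1 := by norm_num
    rw [(main 0 h0).2]
    norm_num
end
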